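/- arXiv:2309.04601 — 9 statements merged into one kernel-verified Lean document; each statement's English description precedes it below -/
import Mathlib

section
/- Let L be a dense subset of ℝ that is closed under addition and negation. Let P ⊆ ℝ^n be a set such that (i) the relative interior of P is nonempty, and (ii) the affine hull of P is a translate of a rational subspace, i.e., there exist z ∈ ℝ^n and vectors d¹, …, dℓ ∈ ℤ^n with aff(P) = { z + λ₁d¹ + ⋯ + λℓdℓ : λ ∈ ℝ^ℓ }. Then P contains a point all of whose coordinates lie in L if and only if aff(P) contains a point all of whose coordinates lie in L. -/
/-! The points of `aff(P)` with coordinates in `L` are dense in `aff(P)` as soon as there is one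
of them, `x`: writing `aff(P) = x + span_ℝ {dⁱ}`, the points `x + ∑ qᵢ dⁱ` with `q ∈ Lˡ` have
coordinates in `L` because the `dⁱ` are integral, and they are dense because `Lˡ` is dense in
`ℝˡ`. A dense subset of `aff(P)` meets the nonempty relatively open set `ri(P) ⊆ P`. -/

open Set

theorem Dense.exists_coe_mem_intrinsicInterior {𝕜 V P : Type*} [Ring 𝕜] [AddCommGroup V]
    [Module 𝕜 V] [TopologicalSpace P] [AddTorsor V P] {s : Set P}
    (hs : (intrinsicInterior 𝕜 s).Nonempty) {t : Set (affineSpan 𝕜 s)} (ht : Dense t) :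
    ∃ x ∈ t, (x : P) ∈ intrinsicInterior 𝕜 s := by
  obtain ⟨_, p, hp, rfl⟩ := hs
  obtain ⟨x, hx, hxt⟩ := ht.inter_open_nonempty _ isOpen_interior ⟨p, hp⟩
  exact ⟨x, hxt, x, hx, rfl⟩

theorem range_add_sum_smul_eq_of_mem {R M ι : Type*} [Ring R] [AddCommGroup M] [Module R M]
    [Fintype ι] {z x : M} {v : ι → M} (hx : x ∈ range fun lam : ι → R => z + ∑ i, lam i • v i) :
    (range fun lam : ι → R => x + ∑ i, lam i • v i) =
      range fun lam : ι → R => z + ∑ i, lam i • v i := by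
  obtain ⟨μ, rfl⟩ := hx
  ext y
  constructor
  · rintro ⟨lam, rfl⟩
    exact ⟨μ + lam, by simp only [Pi.add_apply, add_smul, Finset.sum_add_distrib, add_assoc]⟩
  · rintro ⟨lam, rfl⟩
    refine ⟨lam - μ, ?_⟩
    simp only [Pi.sub_apply, sub_smul, Finset.sum_sub_distrib]
    abel

theorem AddSubgroup.add_sum_smul_intCast_mem {R ι κ : Type*} [Ring R] [Fintype ι]
    (G : AddSubgroup R) {x : κ → R} (hx : ∀ j, x j ∈ G) {q : ι → R} (hq : ∀ i, q i ∈ G)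
    (d : ι → κ → ℤ) (j : κ) : (x + ∑ i, q i • fun j => (d i j : R)) j ∈ G := by
  rw [Pi.add_apply, Finset.sum_apply]
  refine G.add_mem (hx j) (G.sum_mem fun i _ => ?_)
  rw [Pi.smul_apply, smul_eq_mul, ← zsmul_eq_mul']
  exact G.zsmul_mem (hq i) _

theorem stmt_2 (L : Set ℝ) (hdense : Dense L)
    (hadd : ∀ x ∈ L, ∀ y ∈ L, x + y ∈ L) (hneg : ∀ x ∈ L, -x ∈ L)
    (n : ℕ) (P : Set (Fin n → ℝ))
    (hri : (intrinsicInterior ℝ P).Nonempty)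
    (ℓ : ℕ) (z : Fin n → ℝ) (d : Fin ℓ → Fin n → ℤ)
    (haff : (affineSpan ℝ P : Set (Fin n → ℝ)) =
      {x | ∃ lam : Fin ℓ → ℝ, x = z + ∑ i, lam i • (fun j => (d i j : ℝ))}) :
    (∃ x ∈ P, ∀ i, x i ∈ L) ↔
      ∃ x ∈ (affineSpan ℝ P : Set (Fin n → ℝ)), ∀ i, x i ∈ L := by
  refine ⟨fun ⟨x, hxP, hxL⟩ => ⟨x, subset_affineSpan ℝ P hxP, hxL⟩, ?_⟩
  rintro ⟨x, hx, hxL⟩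
  let G := AddSubgroup.ofSub L hdense.nonempty fun a ha b hb => hadd a ha _ (hneg b hb)
  let f : (Fin ℓ → ℝ) → Fin n → ℝ := fun lam => x + ∑ i, lam i • fun j => (d i j : ℝ)
  have hz : (affineSpan ℝ P : Set (Fin n → ℝ)) = range fun lam : Fin ℓ → ℝ =>
      z + ∑ i, lam i • fun j => (d i j : ℝ) := by
    rw [haff]; ext; simp only [mem_ofPred_eq, mem_range, eq_comm]
  have hf : range f = affineSpan ℝ P := by
    rw [hz] at hx ⊢; exact range_add_sum_smul_eq_of_mem hx
  let g := codRestrict f (affineSpan ℝ P) fun lam => hf ▸ mem_range_self lam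
  have hg : Dense (g '' univ.pi fun _ => L) :=
    ((surjective_codRestrict _).2 hf).denseRange.dense_image
      (by fun_prop) (dense_pi univ fun _ _ => hdense)
  obtain ⟨_, ⟨lam, hlam, rfl⟩, hgP⟩ := hg.exists_coe_mem_intrinsicInterior hri
  exact ⟨f lam, intrinsicInterior_subset hgP,
    G.add_sum_smul_intCast_mem hxL (fun i => hlam i (mem_univ i)) d⟩
end

section
/- Let L be a proper subset of ℝ that is closed under addition and negation. Let A be an m × n integer matrix and b ∈ ℤ^m. If there exists x ∈ L^n with Ax = b, then there exists x ∈ L^n with all coordinates rational and Ax = b, i.e., Ax = b has a solution in L^n ∩ ℚ^n. -/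
/-!
The coordinates of `x` generate a finitely generated subgroup `M ⊆ L` of `ℝ`. Its rational part
`M ∩ ℚ` is the kernel of `M → ℝ ⧸ ℚ`, whose image is torsion-free and hence free, so `M ∩ ℚ` is a
direct summand of `M`. An additive retraction `φ : M → M ∩ ℚ`, applied coordinatewise, keeps the
integer equations `A x = b`, because it fixes the rational right-hand side `b`.
-/

open Submodule

/-- The quotient by the kernel embeds in `V`, hence is free, so the quotient map splits. -/
theorem LinearMap.exists_retraction_ker {R M V : Type*} [CommRing R] [IsDomain R]
    [IsPrincipalIdealRing R] [AddCommGroup M] [Module R M] [Module.Finite R M] [AddCommGroup V]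
    [Module R V] [Module.IsTorsionFree R V] (f : M →ₗ[R] V) :
    ∃ p : M →ₗ[R] LinearMap.ker f, ∀ y : LinearMap.ker f, p y = y := by
  have : Module.IsTorsionFree R (M ⧸ LinearMap.ker f) :=
    Function.Injective.moduleIsTorsionFree _
      (LinearMap.ker_eq_bot.1 (ker_liftQ_eq_bot' _ f rfl)) (fun r y => map_smul _ r y)
  obtain ⟨s, hs⟩ := (LinearMap.ker f).mkQ.exists_rightInverse_of_surjective (range_mkQ _)
  have hs' : ∀ y : M ⧸ LinearMap.ker f, (LinearMap.ker f).mkQ (s y) = y :=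
    fun y => LinearMap.congr_fun hs y
  refine ⟨LinearMap.codRestrict _ (LinearMap.id - s ∘ₗ (LinearMap.ker f).mkQ) fun y => ?_,
    fun y => ?_⟩
  · rw [← Quotient.mk_eq_zero]
    simpa [sub_eq_zero] using (hs' (Submodule.Quotient.mk y)).symm
  · ext
    simp [(Quotient.mk_eq_zero _).2 y.2]

theorem Submodule.exists_int_retraction_onto_subspace {V : Type*} [AddCommGroup V] [Module ℚ V]
    (W : Submodule ℚ V) (M : Submodule ℤ V) [Module.Finite ℤ M] :
    ∃ φ : M →ₗ[ℤ] M, (∀ y, (φ y : V) ∈ W) ∧ ∀ y : M, (y : V) ∈ W → φ y = y := by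
  have : Module.IsTorsionFree ℤ (V ⧸ W) := Module.IsTorsionFree.trans ℚ
  let f : M →ₗ[ℤ] V ⧸ W := (W.mkQ.restrictScalars ℤ) ∘ₗ M.subtype
  have hker : ∀ y : M, y ∈ LinearMap.ker f ↔ (y : V) ∈ W := fun y => by
    simp [f, Quotient.mk_eq_zero]
  obtain ⟨p, hp⟩ := f.exists_retraction_ker
  exact ⟨(LinearMap.ker f).subtype ∘ₗ p, fun y => (hker _).1 (p y).2,
    fun y hy => congrArg Subtype.val (hp ⟨y, (hker y).2 hy⟩)⟩

theorem Submodule.span_int_subset_of_add_neg_closed {G : Type*} [AddCommGroup G] {L s : Set G}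
    (hadd : ∀ x ∈ L, ∀ y ∈ L, x + y ∈ L) (hneg : ∀ x ∈ L, -x ∈ L) (hs : s.Nonempty)
    (hsL : s ⊆ L) : (span ℤ s : Set G) ⊆ L := by
  obtain ⟨a, ha⟩ := hs
  let H : AddSubgroup G :=
    { carrier := L
      add_mem' := fun hx hy => hadd _ hx _ hy
      zero_mem' := by simpa using hadd _ (hsL ha) _ (hneg _ (hsL ha))
      neg_mem' := fun hx => hneg _ hx }
  exact (span_le (p := H.toIntSubmodule)).2 hsL

theorem stmt_6_general (L : Set ℝ)
    (hadd : ∀ x ∈ L, ∀ y ∈ L, x + y ∈ L) (hneg : ∀ x ∈ L, -x ∈ L)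
    (m n : ℕ) (A : Matrix (Fin m) (Fin n) ℤ) (b : Fin m → ℤ)
    (hsol : ∃ x : Fin n → ℝ, (∀ j, x j ∈ L) ∧ ∀ i, ∑ j, (A i j : ℝ) * x j = (b i : ℝ)) :
    ∃ x : Fin n → ℝ, (∀ j, x j ∈ L) ∧ (∀ j, ∃ q : ℚ, x j = (q : ℝ)) ∧
      ∀ i, ∑ j, (A i j : ℝ) * x j = (b i : ℝ) := by
  obtain ⟨x, hxL, hAx⟩ := hsol
  let M := span ℤ (Set.range x)
  have : Module.Finite ℤ M := Module.Finite.span_of_finite ℤ (Set.finite_range x)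
  obtain ⟨φ, hφ_mem, hφ_fix⟩ := exists_int_retraction_onto_subspace (1 : Submodule ℚ ℝ) M
  let xM : Fin n → M := fun j => ⟨x j, subset_span ⟨j, rfl⟩⟩
  refine ⟨fun j => φ (xM j), fun j => ?_, fun j => ?_, fun i => ?_⟩
  · exact span_int_subset_of_add_neg_closed hadd hneg (Set.range_nonempty_iff_nonempty.2 ⟨j⟩)
      (Set.range_subset_iff.2 hxL) (φ (xM j)).2
  · obtain ⟨q, hq⟩ := mem_one.1 (hφ_mem (xM j))
    exact ⟨q, by simpa using hq.symm⟩
  · have hAxM : ((∑ j, A i j • xM j : M) : ℝ) = b i := by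
      simpa [xM, zsmul_eq_mul] using hAx i
    have hfix := congrArg Subtype.val
      (hφ_fix (∑ j, A i j • xM j) (mem_one.2 ⟨b i, by simp [hAxM]⟩))
    simpa [map_sum, zsmul_eq_mul, hAxM] using hfix

theorem stmt_6 (L : Set ℝ) (hproper : L ≠ Set.univ)
    (hadd : ∀ x ∈ L, ∀ y ∈ L, x + y ∈ L) (hneg : ∀ x ∈ L, -x ∈ L)
    (m n : ℕ) (A : Matrix (Fin m) (Fin n) ℤ) (b : Fin m → ℤ)
    (hsol : ∃ x : Fin n → ℝ, (∀ j, x j ∈ L) ∧ ∀ i, ∑ j, (A i j : ℝ) * x j = (b i : ℝ)) :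
    ∃ x : Fin n → ℝ, (∀ j, x j ∈ L) ∧ (∀ j, ∃ q : ℚ, x j = (q : ℝ)) ∧
      ∀ i, ∑ j, (A i j : ℝ) * x j = (b i : ℝ) :=
  stmt_6_general L hadd hneg m n A b hsol
end

section
/- Let L ⊆ ℝ be closed under addition and negation and suppose L ∩ ℚ is dense in ℝ. Let A be an m × n rational matrix and b ∈ ℚ^m, and let P = { x ∈ ℝ^n : Ax ≤ b }. Then P contains a point of L^n if and only if P contains a point of L^n all of whose coordinates are rational. -/
/-!
View `ℝ ⧸ ℚ` as a `ℚ`-vector space. The classes of the coordinates of a point `x ∈ P ∩ Lⁿ` span a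
finitely generated torsion-free, hence free, `ℤ`-module; lifting a basis gives `s ∈ Lᵖ`, linearly
independent over `ℚ` modulo `ℚ`, with `x = q + C s` for a rational `q ∈ Lⁿ` and an integer matrix
`C`. This independence forces `Aᵢ C = 0` for every constraint `i` active at `x`, so `g ↦ q + C g`
keeps the active constraints tight, and the slack ones stay slack for `g` near `s`. A point `g` of
the dense set `(L ∩ ℚ)ᵖ` near `s` then gives the required point `q + C g`.
-/

open Set Matrix Filter Topology

lemma mem_span_one_iff_exists_ratCast {x : ℝ} : x ∈ ℚ ∙ (1 : ℝ) ↔ ∃ q : ℚ, x = q := by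
  simp [Submodule.mem_span_singleton, Rat.smul_def, eq_comm]

lemma AddSubgroup.sum_intCast_mul_mem {κ : Type*} [Fintype κ] (H : AddSubgroup ℝ) (c : κ → ℤ)
    {g : κ → ℝ} (hg : ∀ t, g t ∈ H) : ∑ t, (c t : ℝ) * g t ∈ H :=
  H.sum_mem fun t _ => H.int_mul_mem _ (hg t)

lemma eq_zero_of_linearIndependent_mkQ {ι : Type*} [Fintype ι] {s : ι → ℝ}
    (hs : LinearIndependent ℚ ((ℚ ∙ (1 : ℝ)).mkQ ∘ s)) {r : ι → ℚ}
    (hr : ∑ t, (r t : ℝ) * s t ∈ ℚ ∙ (1 : ℝ)) : r = 0 := by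
  refine funext <| Fintype.linearIndependent_iff.mp hs r ?_
  have h := (Submodule.Quotient.mk_eq_zero _).mpr hr
  rw [← Submodule.mkQ_apply] at h
  simpa only [← Rat.smul_def, map_sum, map_smul, Function.comp_apply] using h

lemma exists_decomposition_mod_rat {ι : Type*} [Fintype ι] (x : ι → ℝ) :
    ∃ (p : ℕ) (c : ι → Fin p → ℤ) (s : Fin p → ℝ),
      (∀ t, s t ∈ AddSubgroup.closure (range x)) ∧
      (∀ j, x j - ∑ t, (c j t : ℝ) * s t ∈ ℚ ∙ (1 : ℝ)) ∧
      LinearIndependent ℚ ((ℚ ∙ (1 : ℝ)).mkQ ∘ s) := by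
  set π := (ℚ ∙ (1 : ℝ)).mkQ
  have := IsAddTorsionFree.of_module_rat (ℝ ⧸ ℚ ∙ (1 : ℝ))
  set N := Submodule.span ℤ (range (π ∘ x))
  have : Module.Finite ℤ N := Module.Finite.span_of_finite ℤ (finite_range _)
  set B := Module.finBasis ℤ N
  have hB : ∀ t, ∃ w : ι → ℤ, ∑ j, w j • π (x j) = B t :=
    fun t => (Submodule.mem_span_range_iff_exists_fun ℤ).mp (B t).2
  choose w hw using hB
  have hxN : ∀ j, π (x j) ∈ N := fun j => Submodule.subset_span ⟨j, rfl⟩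
  have hπs : ∀ t, π (∑ j, w t j • x j) = B t := fun t => by
    simpa only [map_sum, map_zsmul] using hw t
  refine ⟨_, fun j t => B.repr ⟨π (x j), hxN j⟩ t, fun t => ∑ j, w t j • x j, ?_, ?_, ?_⟩
  · exact fun t => AddSubgroup.sum_mem _ fun j _ =>
      AddSubgroup.zsmul_mem _ (AddSubgroup.subset_closure (mem_range_self j)) _
  · intro j
    beta_reduce
    rw [← Submodule.Quotient.mk_eq_zero]
    change π _ = 0
    rw [map_sub, sub_eq_zero]
    have := congrArg Subtype.val (B.sum_repr ⟨π (x j), hxN j⟩)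
    simpa only [map_sum, ← zsmul_eq_mul, map_zsmul, hπs, Submodule.coe_sum, Submodule.coe_smul]
      using this.symm
  · have hB : LinearIndependent ℤ ((↑) ∘ B : Fin _ → ℝ ⧸ ℚ ∙ (1 : ℝ)) :=
      B.linearIndependent.map' N.subtype N.ker_subtype
    rw [LinearIndependent.iff_fractionRing ℤ ℚ] at hB
    simpa only [Function.comp_def, hπs] using hB

lemma eventually_forall_le_of_active_const {X κ : Type*} [TopologicalSpace X] [Finite κ]
    {u : κ → X → ℝ} {b : κ → ℝ} {s : X} (hu : ∀ i, ContinuousAt (u i) s)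
    (hs : ∀ i, u i s ≤ b i) (htight : ∀ i, u i s = b i → ∀ g, u i g = b i) :
    ∀ᶠ g in 𝓝 s, ∀ i, u i g ≤ b i := by
  refine eventually_all.mpr fun i => ?_
  rcases (hs i).lt_or_eq with hlt | heq
  · exact ((hu i).eventually_lt continuousAt_const hlt).mono fun _ => le_of_lt
  · exact Eventually.of_forall fun g => (htight i heq g).le

theorem exists_mem_inf_rat_of_mulVec_le (G : AddSubgroup ℝ)
    (hG : Dense ((G ⊓ (ℚ ∙ (1 : ℝ)).toAddSubgroup : AddSubgroup ℝ) : Set ℝ))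
    {ι κ : Type*} [Fintype ι] [Finite κ] (A : Matrix κ ι ℚ) (b : κ → ℚ) {x : ι → ℝ}
    (hx : A.map (↑) *ᵥ x ≤ (↑) ∘ b) (hxG : ∀ j, x j ∈ G) :
    ∃ y, A.map (↑) *ᵥ y ≤ (↑) ∘ b ∧ ∀ j, y j ∈ G ⊓ (ℚ ∙ (1 : ℝ)).toAddSubgroup := by
  set H := G ⊓ (ℚ ∙ (1 : ℝ)).toAddSubgroup
  set A' : Matrix κ ι ℝ := A.map (↑)
  obtain ⟨p, c, s, hsx, hxq, hs⟩ := exists_decomposition_mod_rat x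
  set C : Matrix ι (Fin p) ℝ := of fun j t => (c j t : ℝ)
  set D : Matrix κ (Fin p) ℚ := A * of fun j t => (c j t : ℚ)
  set q := x - C *ᵥ s
  have hxqs : x = q + C *ᵥ s := (sub_add_cancel _ _).symm
  have hsG : ∀ t, s t ∈ G := fun t =>
    (AddSubgroup.closure_le G).mpr (range_subset_iff.mpr hxG) (hsx t)
  have hqH : ∀ j, q j ∈ H := fun j =>
    ⟨G.sub_mem (hxG j) (G.sum_intCast_mul_mem (c j) hsG), hxq j⟩
  have hA'q : ∀ i, (A' *ᵥ q) i ∈ ℚ ∙ (1 : ℝ) := fun i =>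
    Submodule.sum_mem _ fun j _ => by
      simpa [A', Rat.smul_def] using Submodule.smul_mem _ (A i j) (hqH j).2
  have hsplit : ∀ g i, (A' *ᵥ (q + C *ᵥ g)) i = (A' *ᵥ q) i + ∑ t, (D i t : ℝ) * g t := by
    intro g i
    rw [mulVec_add, mulVec_mulVec, Pi.add_apply]
    simp [A', C, D, mulVec, dotProduct, mul_apply, Finset.sum_mul]
  have hrow : ∀ i, (A' *ᵥ (q + C *ᵥ s)) i = b i → D i = 0 := by
    intro i hi
    refine eq_zero_of_linearIndependent_mkQ hs ?_
    rw [show ∑ t, (D i t : ℝ) * s t = b i - (A' *ᵥ q) i by rw [← hi, hsplit]; ring]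
    exact sub_mem (mem_span_one_iff_exists_ratCast.mpr ⟨b i, rfl⟩) (hA'q i)
  have hev : ∀ᶠ g in 𝓝 s, ∀ i, (A' *ᵥ (q + C *ᵥ g)) i ≤ b i := by
    refine eventually_forall_le_of_active_const (fun i => ?_) ?_ ?_
    · fun_prop
    · simpa [← hxqs] using fun i => hx i
    · intro i hi g
      rw [← hi, hsplit, hsplit, hrow i hi]
      simp
  obtain ⟨g, hgH, hg⟩ := (dense_pi univ fun _ _ => hG).inter_nhds_nonempty hev
  exact ⟨q + C *ᵥ g, fun i => hg i,
    fun j => H.add_mem (hqH j) (H.sum_intCast_mul_mem (c j) fun t => hgH t trivial)⟩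

theorem stmt_7 (L : Set ℝ)
    (hadd : ∀ x ∈ L, ∀ y ∈ L, x + y ∈ L) (hneg : ∀ x ∈ L, -x ∈ L)
    (hdense : Dense (L ∩ Set.range ((↑) : ℚ → ℝ)))
    (m n : ℕ) (A : Matrix (Fin m) (Fin n) ℚ) (b : Fin m → ℚ) :
    (∃ x : Fin n → ℝ, (∀ i, ∑ j, (A i j : ℝ) * x j ≤ (b i : ℝ)) ∧ ∀ j, x j ∈ L) ↔
      ∃ x : Fin n → ℝ, (∀ i, ∑ j, (A i j : ℝ) * x j ≤ (b i : ℝ)) ∧ (∀ j, x j ∈ L) ∧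
        ∀ j, ∃ q : ℚ, x j = (q : ℝ) := by
  have hL0 : (0 : ℝ) ∈ L := by
    obtain ⟨a, ha, -⟩ := hdense.nonempty
    simpa using hadd a ha (-a) (hneg a ha)
  let G : AddSubgroup ℝ :=
    { carrier := L
      add_mem' := fun ha hb => hadd _ ha _ hb
      zero_mem' := hL0
      neg_mem' := fun ha => hneg _ ha }
  have hG : ((G ⊓ (ℚ ∙ (1 : ℝ)).toAddSubgroup : AddSubgroup ℝ) : Set ℝ) =
      L ∩ range ((↑) : ℚ → ℝ) := by
    ext
    simp [G, mem_span_one_iff_exists_ratCast, eq_comm]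
  constructor
  · rintro ⟨x, hx, hxL⟩
    obtain ⟨y, hy, hyG⟩ := exists_mem_inf_rat_of_mulVec_le G (hG ▸ hdense) A b hx hxL
    exact ⟨y, hy, fun j => (hyG j).1, fun j => mem_span_one_iff_exists_ratCast.mp (hyG j).2⟩
  · rintro ⟨x, hx, hxL, -⟩
    exact ⟨x, hx, hxL⟩
end

section
/- Let L be a dense proper subset of ℝ that is closed under addition and negation. Let A be an m × n integer matrix, b ∈ ℤ^m, c ∈ ℚ^n, and P = { x ∈ ℝ^n : Ax ≤ b }. Suppose the linear program max{ cᵀx : Ax ≤ b } attains an optimal value τ (i.e., τ is the maximum of cᵀx over P and is attained), and let F = P ∩ { x : cᵀx = τ } be the optimal face. Then the following are equivalent: (a) F contains no point of L^n; (b) there exist ȳ, ū ∈ ℚ^m such that (i) supp(ū) ⊆ supp(ȳ), (ii) ȳ ≥ 0, Aᵀȳ = c, and bᵀȳ = τ (i.e., ȳ is an optimal solution of the dual min{ bᵀy : Aᵀy = c, y ≥ 0 }), and (iii) Aᵀū ∈ ℤ^n and bᵀū ∉ L. -/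
/-!
(b) ⇒ (a): by complementary slackness every point `x` of the optimal face `F` satisfies
`Aᵢ x = bᵢ` on the support of `ȳ`, which contains that of `ū`; hence `bᵀū = (Aᵀū)ᵀx` is an
integer combination of the coordinates of `x`, so it lies in `L` whenever `x ∈ Lⁿ`.

(a) ⇒ (b): let `T` be the implicit equalities of `F` and `x₀ ∈ F` a point (an average of points
of `F`) at which every other row is strict. A direction `d` with `A_T d ≤ 0` and `cᵀd ≥ 0` keeps
`x₀ + εd` inside `F` for small `ε > 0`, so in fact `A_T d = 0` and `cᵀd = 0`. Stiemke's theorem,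
derived from Farkas' lemma over `ℚ` (proved by Fourier–Motzkin elimination), then yields a
rational `ȳ > 0` on `T` with `A_Tᵀ ȳ = c`. If every rational `u` on `T` with `A_Tᵀu` integral had
`b_Tᵀu ∈ L`, then the integer points of the row space of `A_T` would take values in `L` at `x₀`.
Writing `x₀` in a basis of `ℤⁿ` adapted to these integer points, the coordinates along them are
in `L` and the others can be approximated within `L` by density; this gives points of `Lⁿ`
arbitrarily close to `x₀` with `A_T x = b_T`, and those close enough lie in `F`.
-/

open Matrix Finset Filter Topology

lemma Finset.exists_between_of_forall_le {α : Type*} [LinearOrder α] [Nonempty α]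
    (s t : Finset α) (h : ∀ x ∈ s, ∀ y ∈ t, x ≤ y) :
    ∃ z, (∀ x ∈ s, x ≤ z) ∧ ∀ y ∈ t, z ≤ y := by
  by_cases hs : s.Nonempty
  · exact ⟨s.max' hs, fun x hx => s.le_max' x hx, h _ (s.max'_mem hs)⟩
  by_cases ht : t.Nonempty
  · exact ⟨t.min' ht, fun x hx => absurd ⟨x, hx⟩ hs, fun y hy => t.min'_le y hy⟩
  · exact ⟨Classical.arbitrary α, fun x hx => absurd ⟨x, hx⟩ hs, fun y hy => absurd ⟨y, hy⟩ ht⟩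

lemma vecMul_replicateRow_unit {R η : Type*} [NonUnitalNonAssocSemiring R] (v : Unit → R)
    (w : η → R) : v ᵥ* replicateRow Unit w = v () • w := by
  ext; simp [vecMul, dotProduct]

lemma dotProduct_extend_subtype_val {ι R : Type*} [Fintype ι] [CommSemiring R] {p : ι → Prop}
    [DecidablePred p] (v : ι → R) (y : Subtype p → R) :
    v ⬝ᵥ Function.extend Subtype.val y 0 = (v ∘ Subtype.val) ⬝ᵥ y := by
  have hout (i : {i // ¬ p i}) : Function.extend Subtype.val y 0 i.1 = 0 :=
    Function.extend_val_apply' i.2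
  rw [dotProduct, ← Fintype.sum_subtype_add_sum_subtype p, dotProduct]
  simp [hout]

lemma transpose_mulVec_extend_subtype_val {ι η R : Type*} [Fintype ι] [CommSemiring R]
    {p : ι → Prop} [DecidablePred p] (A : Matrix ι η R) (y : Subtype p → R) :
    Aᵀ *ᵥ Function.extend Subtype.val y 0 = (A.submatrix Subtype.val id)ᵀ *ᵥ y :=
  funext fun j => dotProduct_extend_subtype_val (fun i => A i j) y

section FourierMotzkin

variable {K ι : Type*} [Field K] [LinearOrder K]

abbrev FourierMotzkinIndex (α : ι → K) :=
  {i // α i = 0} ⊕ {i // 0 < α i} × {i // α i < 0}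

/-- Multiplying a system by this nonnegative matrix eliminates the variable whose coefficients
are `α` (see `fourierMotzkin_mulVec_self`). -/
def fourierMotzkin [DecidableEq ι] (α : ι → K) : Matrix (FourierMotzkinIndex α) ι K :=
  Matrix.of fun
    | .inl i => Pi.single i.1 1
    | .inr (p, q) => α p • Pi.single q.1 1 - α q • Pi.single p.1 1

variable [DecidableEq ι] (α : ι → K)

@[simp] lemma fourierMotzkin_mulVec_inl [Fintype ι] (s : ι → K) (i : {i // α i = 0}) :
    (fourierMotzkin α *ᵥ s) (.inl i) = s i := by
  simp [fourierMotzkin, mulVec]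

@[simp] lemma fourierMotzkin_mulVec_inr [Fintype ι] (s : ι → K) (p : {i // 0 < α i})
    (q : {i // α i < 0}) : (fourierMotzkin α *ᵥ s) (.inr (p, q)) = α p * s q - α q * s p := by
  simp [fourierMotzkin, mulVec, dotProduct, sub_mul, sum_sub_distrib, Pi.single_apply]

lemma fourierMotzkin_mulVec_self [Fintype ι] : fourierMotzkin α *ᵥ α = 0 := by
  ext (i | ⟨p, q⟩)
  · simpa using i.2
  · simp [mul_comm]

lemma fourierMotzkin_nonneg [IsStrictOrderedRing K] (r : FourierMotzkinIndex α) (i : ι) :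
    0 ≤ fourierMotzkin α r i := by
  rcases r with r | ⟨p, q⟩
  · simp [fourierMotzkin, Pi.single_apply]; split_ifs <;> norm_num
  · have hp := p.2; have hq := q.2
    simp only [fourierMotzkin, of_apply, Pi.sub_apply, Pi.smul_apply, smul_eq_mul, Pi.single_apply]
    split_ifs <;> nlinarith

end FourierMotzkin

section Farkas

variable {K : Type*} [Field K] [LinearOrder K] [IsStrictOrderedRing K]

lemma exists_forall_mul_le {ι : Type*} [Fintype ι] (α s : ι → K)
    (hzero : ∀ i, α i = 0 → 0 ≤ s i) (hpair : ∀ p q, 0 < α p → α q < 0 → α q * s p ≤ α p * s q) :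
    ∃ t, ∀ i, α i * t ≤ s i := by
  classical
  obtain ⟨t, hlo, hup⟩ := Finset.exists_between_of_forall_le
    ((univ.filter (α · < 0)).image fun q => s q / α q)
    ((univ.filter (0 < α ·)).image fun p => s p / α p) (by
      simp only [mem_image, mem_filter, mem_univ, true_and]
      rintro _ ⟨q, hq, rfl⟩ _ ⟨p, hp, rfl⟩
      rw [div_le_iff_of_neg hq, div_mul_eq_mul_div, div_le_iff₀ hp]
      linarith [hpair p q hp hq])
  refine ⟨t, fun i => ?_⟩
  rcases lt_trichotomy (α i) 0 with hi | hi | hi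
  · have := hlo _ (mem_image_of_mem _ (by simpa using hi))
    rwa [div_le_iff_of_neg hi, mul_comm] at this
  · simpa [hi] using hzero i hi
  · have := hup _ (mem_image_of_mem _ (by simpa using hi))
    rwa [le_div_iff₀ hi, mul_comm] at this

theorem farkas_fin : ∀ (n : ℕ) {ι : Type*} [Fintype ι] (A : Matrix ι (Fin n) K) (b : ι → K),
    (∃ x, A *ᵥ x ≤ b) ∨ ∃ y, 0 ≤ y ∧ y ᵥ* A = 0 ∧ y ⬝ᵥ b < 0
  | 0, ι, _, A, b => by
    classical
    by_cases hb : 0 ≤ b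
    · exact .inl ⟨0, by simpa using hb⟩
    · obtain ⟨i, hi⟩ : ∃ i, b i < 0 := by simpa [Pi.le_def] using hb
      exact .inr ⟨Pi.single i 1, Pi.single_nonneg.2 zero_le_one, Subsingleton.elim _ _,
        by simpa using hi⟩
  | n + 1, ι, _, A, b => by
    classical
    set α : ι → K := fun i => A i 0
    set R := A.submatrix id Fin.succ
    rcases farkas_fin n (fourierMotzkin α * R) (fourierMotzkin α *ᵥ b) with
      ⟨x, hx⟩ | ⟨y, hy0, hyA, hyb⟩
    · have hs : 0 ≤ fourierMotzkin α *ᵥ (b - R *ᵥ x) := by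
        rw [mulVec_sub, mulVec_mulVec]; exact sub_nonneg.2 hx
      obtain ⟨t, ht⟩ := exists_forall_mul_le α (b - R *ᵥ x)
        (fun i hi => by simpa using hs (.inl ⟨i, hi⟩))
        (fun p q hp hq => by simpa using hs (.inr (⟨p, hp⟩, ⟨q, hq⟩)))
      refine .inl ⟨Fin.cons t x, fun i => ?_⟩
      have hcons : (A *ᵥ Fin.cons t x) i = α i * t + (R *ᵥ x) i := by
        simp [mulVec, dotProduct, Fin.sum_univ_succ, α, R]
      have := ht i
      simp only [Pi.sub_apply] at this
      linarith
    · refine .inr ⟨y ᵥ* fourierMotzkin α, fun i => sum_nonneg fun r _ =>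
        mul_nonneg (hy0 r) (fourierMotzkin_nonneg α r i), ?_, by rwa [← dotProduct_mulVec]⟩
      ext j
      refine Fin.cases ?_ (fun k => ?_) j
      · change (y ᵥ* fourierMotzkin α) ⬝ᵥ α = 0
        rw [← dotProduct_mulVec, fourierMotzkin_mulVec_self, dotProduct_zero]
      · change (y ᵥ* fourierMotzkin α ᵥ* R) k = 0
        rw [vecMul_vecMul, hyA, Pi.zero_apply]

theorem farkas {ι η : Type*} [Fintype ι] [Fintype η] (A : Matrix ι η K) (b : ι → K) :
    (∃ x, A *ᵥ x ≤ b) ∨ ∃ y, 0 ≤ y ∧ y ᵥ* A = 0 ∧ y ⬝ᵥ b < 0 := by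
  let e := Fintype.equivFin η
  refine (farkas_fin _ (A.submatrix id e.symm) b).imp (fun ⟨x, hx⟩ => ⟨x ∘ e, ?_⟩)
    fun ⟨y, hy0, hyA, hyb⟩ => ⟨y, hy0, funext fun j => ?_, hyb⟩
  · simpa [submatrix_mulVec_equiv] using hx
  · rw [← e.symm_apply_apply j]; exact congrFun hyA (e j)

theorem exists_nonneg_vecMul_eq_of_forall_mulVec_nonpos {κ η : Type*} [Fintype κ] [Fintype η]
    (M : Matrix κ η K) (v : η → K) (h : ∀ d, M *ᵥ d ≤ 0 → v ⬝ᵥ d ≤ 0) :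
    ∃ z, 0 ≤ z ∧ z ᵥ* M = v := by
  rcases farkas (fromRows M (replicateRow Unit (-v))) (Sum.elim 0 fun _ => -1) with
    ⟨d, hd⟩ | ⟨y, hy0, hyM, hyb⟩
  · have hM : M *ᵥ d ≤ 0 := fun k => hd (.inl k)
    have hv : -(v ⬝ᵥ d) ≤ -1 := by simpa [replicateRow_mulVec_eq_const] using hd (.inr ())
    linarith [h d hM]
  · set s := y (.inr ())
    have hs : 0 < s := by simpa [dotProduct, s] using hyb
    refine ⟨s⁻¹ • (y ∘ Sum.inl), fun k => smul_nonneg (inv_nonneg.2 hs.le) (hy0 _), ?_⟩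
    rw [vecMul_fromRows, vecMul_replicateRow_unit, smul_neg, add_neg_eq_zero] at hyM
    rw [smul_vecMul, hyM]
    exact inv_smul_smul₀ hs.ne' v

theorem exists_pos_vecMul_eq_zero {κ η : Type*} [Fintype κ] [Fintype η] (M : Matrix κ η K)
    (h : ∀ d, M *ᵥ d ≤ 0 → M *ᵥ d = 0) : ∃ z, (∀ k, 0 < z k) ∧ z ᵥ* M = 0 := by
  classical
  have hneg (k : κ) : ∃ z, 0 ≤ z ∧ z ᵥ* M = -M k :=
    exists_nonneg_vecMul_eq_of_forall_mulVec_nonpos M (-M k) fun d hd => by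
      rw [neg_dotProduct, neg_nonpos]; exact (congrFun (h d hd) k).ge
  choose z hz0 hzM using hneg
  refine ⟨∑ k, (z k + Pi.single k 1 : κ → K), fun k => ?_, ?_⟩
  · have hk : z k k + 1 ≤ (∑ j, (z j + Pi.single j 1 : κ → K)) k := by
      rw [Finset.sum_apply]
      convert single_le_sum (f := fun j => (z j + Pi.single j 1 : κ → K) k)
        (fun j _ => (add_nonneg (hz0 j) (Pi.single_nonneg.2 zero_le_one) :
          0 ≤ z j + Pi.single j 1) k) (mem_univ k) using 1
      simp
    linarith [show (0 : K) ≤ z k k from hz0 k k]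
  · simp [sum_vecMul, add_vecMul, hzM, Matrix.row]

lemma mulVec_apply_eq_of_dotProduct_mulVec_eq {ι η : Type*} [Fintype ι] [Fintype η]
    {A : Matrix ι η K} {b : ι → K} {x : η → K} {y : ι → K} (hx : A *ᵥ x ≤ b) (hy : 0 ≤ y)
    (heq : y ⬝ᵥ (A *ᵥ x) = y ⬝ᵥ b) {i : ι} (hi : y i ≠ 0) : (A *ᵥ x) i = b i := by
  have hsum : ∑ k, y k * (b k - (A *ᵥ x) k) = 0 := by
    simp only [mul_sub, sum_sub_distrib]; exact sub_eq_zero.2 heq.symm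
  have := (sum_eq_zero_iff_of_nonneg fun k _ => mul_nonneg (hy k) (sub_nonneg.2 (hx k))).1 hsum i
    (mem_univ i)
  exact (sub_eq_zero.1 ((mul_eq_zero.1 this).resolve_left hi)).symm

end Farkas

theorem Convex.exists_forall_pos_of_exists_pos {K E ι : Type*} [Field K] [LinearOrder K]
    [IsStrictOrderedRing K] [AddCommGroup E] [Module K E] [Fintype ι] {S : Set E}
    (hS : Convex K S) (hne : S.Nonempty) {f : ι → E → K} (hf : ∀ i, ConcaveOn K S (f i))
    (hf0 : ∀ i, ∀ x ∈ S, 0 ≤ f i x) :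
    ∃ x ∈ S, ∀ i, (∃ x' ∈ S, 0 < f i x') → 0 < f i x := by
  classical
  obtain ⟨x₀, hx₀⟩ := hne
  have hwit (i : ι) : ∃ x ∈ S, (∃ x' ∈ S, 0 < f i x') → 0 < f i x := by
    by_cases h : ∃ x' ∈ S, 0 < f i x'
    · obtain ⟨x', hx', hpos⟩ := h
      exact ⟨x', hx', fun _ => hpos⟩
    · exact ⟨x₀, hx₀, fun h' => absurd h' h⟩
  choose X hXS hXpos using hwit
  let p : Option ι → E := fun o => o.elim x₀ X
  have hpS : ∀ o ∈ (univ : Finset (Option ι)), p o ∈ S := by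
    rintro (_ | i) _
    exacts [hx₀, hXS i]
  have hw : (0 : K) < ∑ _o : Option ι, 1 := by simp; positivity
  refine ⟨univ.centerMass 1 p, hS.centerMass_mem (fun _ _ => zero_le_one) hw hpS,
    fun i hi => ?_⟩
  refine lt_of_lt_of_le ?_ ((hf i).le_map_centerMass (fun _ _ => zero_le_one) hw hpS)
  rw [centerMass]
  refine smul_pos (inv_pos.2 hw) (lt_of_lt_of_le (hXpos i hi) ?_)
  simpa [p] using single_le_sum (f := fun o => f i (p o))
    (fun o _ => hf0 i _ (hpS o (mem_univ o))) (mem_univ (some i))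

lemma eventually_mulVec_lt {ι η : Type*} [Finite ι] [Fintype η] (M : Matrix ι η ℝ) (r : ι → ℝ)
    (x₀ : η → ℝ) : ∀ᶠ x in 𝓝 x₀, ∀ i, (M *ᵥ x₀) i < r i → (M *ᵥ x) i < r i := by
  refine eventually_all.2 fun i => ?_
  by_cases hi : (M *ᵥ x₀) i < r i
  · have hcont : Continuous fun x => (M *ᵥ x) i := by fun_prop
    filter_upwards [hcont.continuousAt.eventually_lt continuousAt_const hi] with x hx using
      fun _ => hx
  · exact Eventually.of_forall fun _ h => absurd h hi

lemma eventually_mulVec_add_smul_le {ι η : Type*} [Finite ι] [Fintype η] {M : Matrix ι η ℝ}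
    {r : ι → ℝ} {x₀ d : η → ℝ} (hx₀ : M *ᵥ x₀ ≤ r)
    (hd : ∀ i, (M *ᵥ x₀) i = r i → (M *ᵥ d) i ≤ 0) :
    ∀ᶠ ε in 𝓝[>] (0 : ℝ), M *ᵥ (x₀ + ε • d) ≤ r := by
  have hlim : Tendsto (fun ε : ℝ => x₀ + ε • d) (𝓝[>] 0) (𝓝 x₀) := by
    have : Continuous fun ε : ℝ => x₀ + ε • d := by fun_prop
    simpa using (this.tendsto 0).mono_left nhdsWithin_le_nhds
  filter_upwards [hlim.eventually (eventually_mulVec_lt M r x₀), self_mem_nhdsWithin]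
    with ε hlt (hε : 0 < ε) i
  rcases (hx₀ i).lt_or_eq with hi | hi
  · exact (hlt i hi).le
  · have := hd i hi
    simp only [mulVec_add, mulVec_smul, Pi.add_apply, Pi.smul_apply, smul_eq_mul, hi]
    nlinarith

lemma AddSubgroup.intCast_dotProduct_mem {η : Type*} [Fintype η] (L : AddSubgroup ℝ)
    (w : η → ℤ) {x : η → ℝ} (hx : ∀ j, x j ∈ L) : (Int.cast ∘ w) ⬝ᵥ x ∈ L :=
  L.sum_mem fun j _ => by simpa [zsmul_eq_mul] using L.zsmul_mem (hx j) (w j)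

lemma exists_intCast_eq_smul {η : Type*} [Finite η] (v : η → ℚ) :
    ∃ D : ℤ, D ≠ 0 ∧ ∃ w : η → ℤ, Int.cast ∘ w = (D : ℚ) • v := by
  obtain ⟨D, hD⟩ := IsLocalization.exist_integer_multiples_of_finite (nonZeroDivisors ℤ) v
  choose w hw using hD
  refine ⟨D, nonZeroDivisors.coe_ne_zero D, w, funext fun j => ?_⟩
  simpa [zsmul_eq_mul] using hw j

theorem Submodule.exists_basis_adapted_of_smul_mem {η : Type*} [Fintype η]
    (Λ : Submodule ℤ (η → ℤ)) (hΛ : ∀ (a : ℤ) (w : η → ℤ), a ≠ 0 → a • w ∈ Λ → w ∈ Λ) :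
    ∃ (B : Module.Basis η ℤ (η → ℤ)) (s : Set η),
      (∀ k ∈ s, B k ∈ Λ) ∧ ∀ w ∈ Λ, ∀ k ∉ s, B.repr w k = 0 := by
  obtain ⟨n, snf⟩ := Λ.smithNormalForm (Pi.basisFun ℤ η)
  refine ⟨snf.bM, Set.range snf.f, ?_,
    fun w hw k hk => snf.repr_eq_zero_of_notMem_range ⟨w, hw⟩ hk⟩
  rintro _ ⟨i, rfl⟩
  have hbN : (snf.bN i : η → ℤ) = snf.a i • snf.bM (snf.f i) := snf.snf i
  refine hΛ (snf.a i) _ (fun h => snf.bN.ne_zero i ?_) (hbN ▸ (snf.bN i).2)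
  ext1; simp [hbN, h]

lemma Module.Basis.toMatrix_basisFun_mulVec {η R : Type*} [Fintype η] [CommRing R]
    (B : Module.Basis η R (η → R)) (w : η → R) : B.toMatrix (Pi.basisFun R η) *ᵥ w = B.repr w := by
  have := (Pi.basisFun R η).toMatrix_mulVec_repr B w
  rwa [show ⇑((Pi.basisFun R η).repr w) = w from funext (Pi.basisFun_repr R η w)] at this

theorem mem_closure_setOf_intCast_dotProduct_eq {η : Type*} [Fintype η] (L : AddSubgroup ℝ)
    (hL : Dense (L : Set ℝ)) (B : Module.Basis η ℤ (η → ℤ)) (s : Set η) (x₀ : η → ℝ)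
    (hx₀ : ∀ k ∈ s, (Int.cast ∘ B k) ⬝ᵥ x₀ ∈ L) :
    x₀ ∈ closure {x | (∀ j, x j ∈ L) ∧ ∀ w : η → ℤ, (∀ k ∉ s, B.repr w k = 0) →
      (Int.cast ∘ w) ⬝ᵥ x = (Int.cast ∘ w) ⬝ᵥ x₀} := by
  classical
  -- `P` has the vectors of `B` as columns and `Q` is its inverse
  let P := (Pi.basisFun ℤ η).toMatrix B
  let Q := B.toMatrix (Pi.basisFun ℤ η)
  have hPQ : P.map (Int.cast : ℤ → ℝ) * Q.map Int.cast = 1 := by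
    have := congrArg (·.map (Int.castRingHom ℝ))
      (Module.Basis.toMatrix_mul_toMatrix_flip (Pi.basisFun ℤ η) B)
    rwa [Matrix.map_mul, Matrix.map_one _ (map_zero _) (map_one _)] at this
  have hQ (w : η → ℤ) : Q.map Int.cast *ᵥ (Int.cast ∘ w) = (Int.cast ∘ B.repr w : η → ℝ) := by
    ext k
    simpa [Q, B.toMatrix_basisFun_mulVec] using ((Int.castRingHom ℝ).map_mulVec Q w k).symm
  -- `t` are the coordinates of `x₀` in the basis `B`, and `φ` maps coordinates back to points
  let t := x₀ ᵥ* P.map Int.cast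
  let φ : (η → ℝ) → η → ℝ := fun y => y ᵥ* Q.map Int.cast
  have hφt : φ t = x₀ := by simp only [φ, t, vecMul_vecMul, hPQ, vecMul_one]
  have htL (k : η) (hk : k ∈ s) : t k ∈ L := by
    have : t k = (Int.cast ∘ B k) ⬝ᵥ x₀ := by
      simp [t, vecMul, dotProduct, P, mul_comm, Module.Basis.toMatrix_apply]
    exact this ▸ hx₀ k hk
  let S : Set (η → ℝ) := Set.univ.pi fun k => if k ∈ s then {t k} else L
  have htS : t ∈ closure S := by
    rw [closure_pi_set]
    intro k _
    dsimp only
    split_ifs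
    exacts [subset_closure rfl, hL (t k)]
  have hyS {y : η → ℝ} (hy : y ∈ S) (k : η) (hk : k ∈ s) : y k = t k := by
    simpa [hk] using hy k (Set.mem_univ k)
  rw [← hφt]
  refine map_mem_closure (by fun_prop) htS fun y hy => ⟨fun j => ?_, fun w hw => ?_⟩
  · have hyL (k : η) : y k ∈ L := by
      by_cases hk : k ∈ s
      · exact hyS hy k hk ▸ htL k hk
      · simpa [hk] using hy k (Set.mem_univ k)
    simpa [φ, vecMul, dotProduct, mul_comm] using L.intCast_dotProduct_mem (fun k => Q k j) hyL
  · simp only [φ, dotProduct_comm (Int.cast ∘ w), ← dotProduct_mulVec, hQ]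
    refine Finset.sum_congr rfl fun k _ => ?_
    by_cases hk : k ∈ s
    · rw [hyS hy k hk]
    · simp [hw k hk]

theorem mem_closure_setOf_mem_and_dotProduct_eq {η : Type*} [Fintype η] (L : AddSubgroup ℝ)
    (hL : Dense (L : Set ℝ)) (W : Submodule ℚ (η → ℚ)) (x₀ : η → ℝ)
    (hx₀ : ∀ w : η → ℤ, (Int.cast ∘ w : η → ℚ) ∈ W → (Int.cast ∘ w) ⬝ᵥ x₀ ∈ L) :
    x₀ ∈ closure {x | (∀ j, x j ∈ L) ∧
      ∀ v ∈ W, (Rat.cast ∘ v) ⬝ᵥ x = (Rat.cast ∘ v) ⬝ᵥ x₀} := by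
  let Λ : Submodule ℤ (η → ℤ) :=
    (W.restrictScalars ℤ).comap ((Int.castAddHom ℚ).toIntLinearMap.compLeft η)
  have hΛ (w : η → ℤ) : w ∈ Λ ↔ (Int.cast ∘ w : η → ℚ) ∈ W := Iff.rfl
  obtain ⟨B, s, hBs, hrepr⟩ := Λ.exists_basis_adapted_of_smul_mem fun a w ha haw => by
    rw [hΛ] at haw ⊢
    have : (Int.cast ∘ (a • w) : η → ℚ) = (a : ℚ) • (Int.cast ∘ w) := by ext; simp
    rwa [this, W.smul_mem_iff (Int.cast_ne_zero.2 ha)] at haw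
  refine closure_mono ?_
    (mem_closure_setOf_intCast_dotProduct_eq L hL B s x₀ fun k hk => hx₀ _ (hBs k hk))
  rintro x ⟨hxL, hxw⟩
  refine ⟨hxL, fun v hv => ?_⟩
  obtain ⟨D, hD, w, hw⟩ := exists_intCast_eq_smul v
  have hwΛ : w ∈ Λ := by rw [hΛ, hw]; exact W.smul_mem _ hv
  have hcast : (Int.cast ∘ w : η → ℝ) = (D : ℝ) • (Rat.cast ∘ v) := by
    ext j; simpa using congrArg (Rat.cast : ℚ → ℝ) (congrFun hw j)
  have key := hxw w (hrepr w hwΛ)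
  rw [hcast, smul_dotProduct, smul_dotProduct, smul_eq_mul, smul_eq_mul] at key
  exact mul_left_cancel₀ (Int.cast_ne_zero.2 hD) key

section RatCast

variable {K : Type*} [Field K] [CharZero K] {ι η : Type*} [Fintype η]

lemma Rat.cast_dotProduct (v w : η → ℚ) :
    ((v ⬝ᵥ w : ℚ) : K) = (Rat.cast ∘ v) ⬝ᵥ (Rat.cast ∘ w) := by
  simpa using (Rat.castHom K).map_dotProduct v w

lemma Rat.cast_comp_mulVec (A : Matrix ι η ℚ) (v : η → ℚ) :
    Rat.cast ∘ (A *ᵥ v) = A.map (Rat.cast : ℚ → K) *ᵥ (Rat.cast ∘ v) :=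
  funext fun i => by simpa using (Rat.castHom K).map_mulVec A v i

lemma Rat.cast_comp_transpose_mulVec_dotProduct [Fintype ι] (A : Matrix ι η ℚ) (u : ι → ℚ)
    (x : η → K) : (Rat.cast ∘ (Aᵀ *ᵥ u)) ⬝ᵥ x = (Rat.cast ∘ u) ⬝ᵥ (A.map Rat.cast *ᵥ x) := by
  have : Rat.cast ∘ (u ᵥ* A) = (Rat.cast ∘ u : ι → K) ᵥ* A.map Rat.cast :=
    funext fun j => by simpa using (Rat.castHom K).map_vecMul A u j
  rw [mulVec_transpose, this, dotProduct_mulVec]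

end RatCast

lemma exists_certificate_of_subtype {ι η : Type*} [Fintype ι] {A : Matrix ι η ℚ} {b : ι → ℚ}
    {c : η → ℚ} {τ : ℝ} (L : AddSubgroup ℝ) {T : Set ι} [DecidablePred (· ∈ T)] {y u : T → ℚ}
    (hy : ∀ k, 0 < y k) (hyc : (A.submatrix Subtype.val id)ᵀ *ᵥ y = c)
    (hyb : (((b ∘ Subtype.val) ⬝ᵥ y : ℚ) : ℝ) = τ)
    (hu : ∀ j, ∃ z : ℤ, ((A.submatrix Subtype.val id)ᵀ *ᵥ u) j = z)
    (hub : (((b ∘ Subtype.val) ⬝ᵥ u : ℚ) : ℝ) ∉ L) :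
    ∃ y u : ι → ℚ, (∀ i, u i ≠ 0 → y i ≠ 0) ∧
      ((0 ≤ y) ∧ Aᵀ *ᵥ y = c ∧ ((b ⬝ᵥ y : ℚ) : ℝ) = τ) ∧
      ((∀ j, ∃ z : ℤ, (Aᵀ *ᵥ u) j = z) ∧ ((b ⬝ᵥ u : ℚ) : ℝ) ∉ L) := by
  refine ⟨Function.extend Subtype.val y 0, Function.extend Subtype.val u 0, fun i hi => ?_,
    ⟨fun i => ?_, ?_, ?_⟩, fun j => ?_, ?_⟩
  · by_cases h : i ∈ T
    · rw [Function.extend_val_apply h]; exact (hy _).ne'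
    · exact absurd (Function.extend_val_apply' h) hi
  · by_cases h : i ∈ T
    · rw [Function.extend_val_apply h]; exact (hy _).le
    · rw [Function.extend_val_apply' h]
  · rwa [transpose_mulVec_extend_subtype_val]
  · rwa [dotProduct_extend_subtype_val]
  · rw [transpose_mulVec_extend_subtype_val]; exact hu j
  · rwa [dotProduct_extend_subtype_val]

section OptimalFace

variable {ι η : Type*} [Fintype η] {A : Matrix ι η ℚ} {b : ι → ℚ} {c : η → ℚ} {τ : ℝ}

variable (A b c τ) in
def optimalFace : Set (η → ℝ) :=
  {x | A.map Rat.cast *ᵥ x ≤ Rat.cast ∘ b ∧ (Rat.cast ∘ c) ⬝ᵥ x = τ}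

lemma convex_optimalFace : Convex ℝ (optimalFace A b c τ) :=
  ((convex_Iic _).linear_preimage (A.map Rat.cast).mulVecLin).inter
    (convex_hyperplane ⟨fun x y => dotProduct_add _ x y, fun a x => dotProduct_smul a _ x⟩ τ)

variable [Fintype ι]

lemma exists_mem_optimalFace_lt (hne : (optimalFace A b c τ).Nonempty) :
    ∃ x₀ ∈ optimalFace A b c τ, ∀ i, (∃ x ∈ optimalFace A b c τ, (A.map Rat.cast *ᵥ x) i ≠ b i) →
      (A.map Rat.cast *ᵥ x₀) i < b i := by
  have hslack (i : ι) :
      ConcaveOn ℝ (optimalFace A b c τ) fun x => (b i : ℝ) - (A.map Rat.cast *ᵥ x) i :=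
    (concaveOn_const _ convex_optimalFace).sub
      ((LinearMap.proj i ∘ₗ (A.map Rat.cast).mulVecLin).convexOn convex_optimalFace)
  obtain ⟨x₀, hx₀, h⟩ := convex_optimalFace.exists_forall_pos_of_exists_pos hne hslack
    fun i x hx => sub_nonneg.2 (hx.1 i)
  exact ⟨x₀, hx₀, fun i ⟨x, hx, hi⟩ => sub_pos.1 (h i ⟨x, hx, sub_pos.2 ((hx.1 i).lt_of_ne hi)⟩)⟩

lemma mulVec_eq_zero_of_mulVec_nonpos {T : Set ι} {x₀ : η → ℝ}
    (hmax : ∀ x, A.map Rat.cast *ᵥ x ≤ Rat.cast ∘ b → (Rat.cast ∘ c) ⬝ᵥ x ≤ τ)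
    (hx₀ : x₀ ∈ optimalFace A b c τ)
    (hT : ∀ i ∈ T, ∀ x ∈ optimalFace A b c τ, (A.map Rat.cast *ᵥ x) i = b i)
    (hstrict : ∀ i ∉ T, (A.map Rat.cast *ᵥ x₀) i < b i) {d : η → ℝ}
    (hd : ∀ i ∈ T, (A.map Rat.cast *ᵥ d) i ≤ 0) (hcd : 0 ≤ (Rat.cast ∘ c) ⬝ᵥ d) :
    (∀ i ∈ T, (A.map Rat.cast *ᵥ d) i = 0) ∧ (Rat.cast ∘ c) ⬝ᵥ d = 0 := by
  obtain ⟨ε, hεP, hε⟩ := ((eventually_mulVec_add_smul_le hx₀.1 fun i hi =>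
    hd i (by_contra fun hiT => (hstrict i hiT).ne hi)).and self_mem_nhdsWithin).exists
  have hε : (0 : ℝ) < ε := hε
  have hcε : (Rat.cast ∘ c) ⬝ᵥ (x₀ + ε • d) = τ + ε * ((Rat.cast ∘ c) ⬝ᵥ d) := by
    rw [dotProduct_add, dotProduct_smul, hx₀.2, smul_eq_mul]
  have hcd0 : (Rat.cast ∘ c) ⬝ᵥ d = 0 := by
    have := hmax _ hεP
    rw [hcε] at this
    exact le_antisymm (nonpos_of_mul_nonpos_right (by linarith) hε) hcd
  refine ⟨fun i hi => ?_, hcd0⟩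
  have h := hT i hi _ ⟨hεP, by rw [hcε, hcd0, mul_zero, add_zero]⟩
  rw [mulVec_add, mulVec_smul, Pi.add_apply, hT i hi x₀ hx₀, Pi.smul_apply, smul_eq_mul,
    add_eq_left] at h
  exact (mul_eq_zero.1 h).resolve_left hε.ne'

lemma exists_pos_transpose_mulVec_eq {T : Set ι} [Fintype T] {x₀ : η → ℝ}
    (hmax : ∀ x, A.map Rat.cast *ᵥ x ≤ Rat.cast ∘ b → (Rat.cast ∘ c) ⬝ᵥ x ≤ τ)
    (hx₀ : x₀ ∈ optimalFace A b c τ)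
    (hT : ∀ i ∈ T, ∀ x ∈ optimalFace A b c τ, (A.map Rat.cast *ᵥ x) i = b i)
    (hstrict : ∀ i ∉ T, (A.map Rat.cast *ᵥ x₀) i < b i) :
    ∃ y : T → ℚ, (∀ k, 0 < y k) ∧ (A.submatrix Subtype.val id)ᵀ *ᵥ y = c := by
  let G : Matrix (T ⊕ Unit) η ℚ := fromRows (A.submatrix Subtype.val id) (replicateRow Unit (-c))
  have hGc (d : η → ℚ) : (G *ᵥ d) (.inr ()) = -(c ⬝ᵥ d) := by
    simp [G, replicateRow_mulVec_eq_const]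
  obtain ⟨z, hz, hzG⟩ := exists_pos_vecMul_eq_zero G fun d hd => by
    have hdT (i : ι) (hi : i ∈ T) : (A.map Rat.cast *ᵥ (Rat.cast ∘ d)) i ≤ (0 : ℝ) := by
      rw [← Rat.cast_comp_mulVec, Function.comp_apply, Rat.cast_nonpos]
      exact hd (.inl ⟨i, hi⟩)
    have hcd : (0 : ℝ) ≤ (Rat.cast ∘ c) ⬝ᵥ (Rat.cast ∘ d) := by
      rw [← Rat.cast_dotProduct, Rat.cast_nonneg, ← neg_nonpos, ← hGc]
      exact hd (.inr ())
    obtain ⟨h1, h2⟩ := mulVec_eq_zero_of_mulVec_nonpos hmax hx₀ hT hstrict hdT hcd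
    ext (⟨i, hi⟩ | _)
    · have := h1 i hi
      rwa [← Rat.cast_comp_mulVec, Function.comp_apply, Rat.cast_eq_zero] at this
    · rw [← Rat.cast_dotProduct, Rat.cast_eq_zero] at h2
      rw [hGc, h2, neg_zero]; rfl
  set s := z (.inr ())
  rw [vecMul_fromRows, vecMul_replicateRow_unit, smul_neg, add_neg_eq_zero] at hzG
  refine ⟨s⁻¹ • (z ∘ Sum.inl), fun k => smul_pos (inv_pos.2 (hz _)) (hz _), ?_⟩
  rw [mulVec_transpose, smul_vecMul, hzG]
  exact inv_smul_smul₀ (hz _).ne' c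

lemma exists_mem_optimalFace_forall_mem (L : AddSubgroup ℝ) (hL : Dense (L : Set ℝ))
    {T : Set ι} [Fintype T] {x₀ : η → ℝ} (hx₀ : x₀ ∈ optimalFace A b c τ)
    (hTx₀ : ∀ i ∈ T, (A.map Rat.cast *ᵥ x₀) i = b i)
    (hstrict : ∀ i ∉ T, (A.map Rat.cast *ᵥ x₀) i < b i)
    (hc : c ∈ Submodule.span ℚ (Set.range (A.submatrix ((↑) : T → ι) id)))
    (hu : ∀ u : T → ℚ, (∀ j, ∃ z : ℤ, ((A.submatrix Subtype.val id)ᵀ *ᵥ u) j = z) →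
      (((b ∘ Subtype.val) ⬝ᵥ u : ℚ) : ℝ) ∈ L) :
    ∃ x ∈ optimalFace A b c τ, ∀ j, x j ∈ L := by
  set W := Submodule.span ℚ (Set.range (A.submatrix ((↑) : T → ι) id))
  have hcl := mem_closure_setOf_mem_and_dotProduct_eq L hL W x₀ fun w hw => by
    obtain ⟨u, hu'⟩ := (Submodule.mem_span_range_iff_exists_fun ℚ).1 hw
    rw [← vecMul_eq_sum, ← mulVec_transpose] at hu'
    have hcast : (Int.cast ∘ w : η → ℝ) = Rat.cast ∘ ((A.submatrix Subtype.val id)ᵀ *ᵥ u) := by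
      ext j; rw [Function.comp_apply, hu']; simp
    have hTx₀' : (A.submatrix Subtype.val id).map Rat.cast *ᵥ x₀ = Rat.cast ∘ (b ∘ Subtype.val) :=
      funext fun k => hTx₀ k.1 k.2
    rw [hcast, Rat.cast_comp_transpose_mulVec_dotProduct, hTx₀', ← Rat.cast_dotProduct,
      dotProduct_comm]
    exact hu u fun j => ⟨w j, by rw [hu']; rfl⟩
  obtain ⟨x, ⟨hxL, hxW⟩, hxstrict⟩ :=
    ((mem_closure_iff_frequently.1 hcl).and_eventually
      (eventually_mulVec_lt (A.map Rat.cast) (Rat.cast ∘ b) x₀)).exists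
  refine ⟨x, ⟨fun i => ?_, ?_⟩, hxL⟩
  · by_cases hi : i ∈ T
    · exact (hxW (A i) (Submodule.subset_span ⟨⟨i, hi⟩, rfl⟩)).trans (hTx₀ i hi) |>.le
    · exact (hxstrict i (hstrict i hi)).le
  · rw [hxW c hc]; exact hx₀.2

lemma dotProduct_mem_of_mem_optimalFace (L : AddSubgroup ℝ) {y u : ι → ℚ}
    (hsupp : ∀ i, u i ≠ 0 → y i ≠ 0) (hy : 0 ≤ y) (hyc : Aᵀ *ᵥ y = c)
    (hyb : ((b ⬝ᵥ y : ℚ) : ℝ) = τ) (hu : ∀ j, ∃ z : ℤ, (Aᵀ *ᵥ u) j = z) {x : η → ℝ}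
    (hx : x ∈ optimalFace A b c τ) (hxL : ∀ j, x j ∈ L) : ((b ⬝ᵥ u : ℚ) : ℝ) ∈ L := by
  have hdual (v : ι → ℚ) : (Rat.cast ∘ (Aᵀ *ᵥ v)) ⬝ᵥ x = (Rat.cast ∘ v) ⬝ᵥ (A.map Rat.cast *ᵥ x) :=
    Rat.cast_comp_transpose_mulVec_dotProduct A v x
  have htight (i : ι) (hi : y i ≠ 0) : (A.map Rat.cast *ᵥ x) i = b i := by
    refine mulVec_apply_eq_of_dotProduct_mulVec_eq (y := Rat.cast ∘ y) hx.1
      (fun k => Rat.cast_nonneg.2 (hy k)) ?_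
      (Rat.cast_ne_zero.2 hi)
    rw [← hdual, hyc, hx.2, ← hyb, Rat.cast_dotProduct, dotProduct_comm]
  choose z hz using hu
  have hcast : (Rat.cast ∘ (Aᵀ *ᵥ u) : η → ℝ) = Int.cast ∘ z := by ext j; simp [hz]
  have huAx : (Rat.cast ∘ u) ⬝ᵥ (A.map Rat.cast *ᵥ x) = (Rat.cast ∘ u) ⬝ᵥ (Rat.cast ∘ b) :=
    sum_congr rfl fun i _ => by
      by_cases hi : u i = 0
      · simp [hi]
      · rw [htight i (hsupp i hi)]; rfl
  rw [Rat.cast_dotProduct, dotProduct_comm, ← huAx, ← hdual, hcast]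
  exact L.intCast_dotProduct_mem z hxL

theorem exists_certificate_of_not_exists_mem (L : AddSubgroup ℝ) (hL : Dense (L : Set ℝ))
    (hopt : IsGreatest ((fun x => (Rat.cast ∘ c) ⬝ᵥ x) ''
      {x : η → ℝ | A.map Rat.cast *ᵥ x ≤ Rat.cast ∘ b}) τ)
    (hF : ¬ ∃ x ∈ optimalFace A b c τ, ∀ j, x j ∈ L) :
    ∃ y u : ι → ℚ, (∀ i, u i ≠ 0 → y i ≠ 0) ∧
      ((0 ≤ y) ∧ Aᵀ *ᵥ y = c ∧ ((b ⬝ᵥ y : ℚ) : ℝ) = τ) ∧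
      ((∀ j, ∃ z : ℤ, (Aᵀ *ᵥ u) j = z) ∧ ((b ⬝ᵥ u : ℚ) : ℝ) ∉ L) := by
  classical
  obtain ⟨⟨x, hxP, hxτ⟩, hmax⟩ := hopt
  -- the implicit equalities of the optimal face
  set T : Set ι := {i | ∀ x ∈ optimalFace A b c τ, (A.map Rat.cast *ᵥ x) i = b i}
  obtain ⟨x₀, hx₀, hlt⟩ := exists_mem_optimalFace_lt ⟨x, hxP, hxτ⟩
  have hstrict (i : ι) (hi : i ∉ T) : (A.map Rat.cast *ᵥ x₀) i < b i :=
    hlt i (by simpa [T] using hi)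
  have hmax' (x : η → ℝ) (hx : A.map Rat.cast *ᵥ x ≤ Rat.cast ∘ b) : (Rat.cast ∘ c) ⬝ᵥ x ≤ τ :=
    hmax ⟨x, hx, rfl⟩
  have hT (i : ι) (hi : i ∈ T) : ∀ x ∈ optimalFace A b c τ, (A.map Rat.cast *ᵥ x) i = b i := hi
  obtain ⟨y, hy, hyc⟩ := exists_pos_transpose_mulVec_eq hmax' hx₀ hT hstrict
  have hTx₀ : (A.submatrix Subtype.val id).map Rat.cast *ᵥ x₀ = Rat.cast ∘ (b ∘ Subtype.val) :=
    funext fun k => hT k.1 k.2 x₀ hx₀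
  obtain ⟨u, hu, hub⟩ : ∃ u : T → ℚ, (∀ j, ∃ z : ℤ, ((A.submatrix Subtype.val id)ᵀ *ᵥ u) j = z) ∧
      (((b ∘ Subtype.val) ⬝ᵥ u : ℚ) : ℝ) ∉ L := by
    by_contra! h
    refine hF (exists_mem_optimalFace_forall_mem L hL hx₀ (fun i hi => hT i hi x₀ hx₀) hstrict ?_ h)
    rw [← hyc, mulVec_transpose, vecMul_eq_sum]
    exact Submodule.sum_mem _ fun k _ => Submodule.smul_mem _ _ (Submodule.subset_span ⟨k, rfl⟩)
  refine exists_certificate_of_subtype L hy hyc ?_ hu hub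
  rw [dotProduct_comm, Rat.cast_dotProduct, ← hTx₀, ← Rat.cast_comp_transpose_mulVec_dotProduct,
    hyc, hx₀.2]

theorem not_exists_mem_optimalFace_iff (L : AddSubgroup ℝ) (hL : Dense (L : Set ℝ))
    (hopt : IsGreatest ((fun x => (Rat.cast ∘ c) ⬝ᵥ x) ''
      {x : η → ℝ | A.map Rat.cast *ᵥ x ≤ Rat.cast ∘ b}) τ) :
    (¬ ∃ x ∈ optimalFace A b c τ, ∀ j, x j ∈ L) ↔
      ∃ y u : ι → ℚ, (∀ i, u i ≠ 0 → y i ≠ 0) ∧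
        ((0 ≤ y) ∧ Aᵀ *ᵥ y = c ∧ ((b ⬝ᵥ y : ℚ) : ℝ) = τ) ∧
        ((∀ j, ∃ z : ℤ, (Aᵀ *ᵥ u) j = z) ∧ ((b ⬝ᵥ u : ℚ) : ℝ) ∉ L) :=
  ⟨exists_certificate_of_not_exists_mem L hL hopt,
    fun ⟨_, _, hsupp, ⟨hy, hyc, hyb⟩, hu, hub⟩ ⟨_, hx, hxL⟩ =>
      hub (dotProduct_mem_of_mem_optimalFace L hsupp hy hyc hyb hu hx hxL)⟩

end OptimalFace

theorem stmt_8_general (L : Set ℝ) (hdense : Dense L)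
    (hadd : ∀ x ∈ L, ∀ y ∈ L, x + y ∈ L) (hneg : ∀ x ∈ L, -x ∈ L)
    (m n : ℕ) (A : Matrix (Fin m) (Fin n) ℤ) (b : Fin m → ℤ) (c : Fin n → ℚ)
    (τ : ℝ)
    (hopt : IsGreatest {t : ℝ | ∃ x : Fin n → ℝ,
      (∀ i, ∑ j, (A i j : ℝ) * x j ≤ (b i : ℝ)) ∧ t = ∑ j, (c j : ℝ) * x j} τ) :
    (¬ ∃ x : Fin n → ℝ, (∀ i, ∑ j, (A i j : ℝ) * x j ≤ (b i : ℝ)) ∧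
        (∑ j, (c j : ℝ) * x j = τ) ∧ ∀ j, x j ∈ L) ↔
      ∃ y u : Fin m → ℚ,
        (∀ i, u i ≠ 0 → y i ≠ 0) ∧
        ((∀ i, 0 ≤ y i) ∧ (∀ j, ∑ i, (A i j : ℚ) * y i = c j) ∧
          ((∑ i, (b i : ℚ) * y i : ℚ) : ℝ) = τ) ∧
        ((∀ j, ∃ zz : ℤ, ∑ i, (A i j : ℚ) * u i = (zz : ℚ)) ∧
          ((∑ i, (b i : ℚ) * u i : ℚ) : ℝ) ∉ L) := by
  let L' : AddSubgroup ℝ :=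
    { carrier := L
      add_mem' := fun ha hb => hadd _ ha _ hb
      zero_mem' := by
        obtain ⟨l, hl⟩ := hdense.nonempty
        simpa using hadd l hl (-l) (hneg l hl)
      neg_mem' := fun ha => hneg _ ha }
  have hopt' : IsGreatest ((fun x => (Rat.cast ∘ c) ⬝ᵥ x) ''
      {x | (A.map (Int.cast : ℤ → ℚ)).map Rat.cast *ᵥ x ≤ Rat.cast ∘ Int.cast ∘ b}) τ := by
    convert hopt using 1
    ext t
    simp [mulVec, dotProduct, Pi.le_def, eq_comm]
  simpa [optimalFace, mulVec, dotProduct, Pi.le_def, funext_iff, L'] using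
    not_exists_mem_optimalFace_iff L' hdense hopt'

theorem stmt_8 (L : Set ℝ) (hdense : Dense L) (hproper : L ≠ Set.univ)
    (hadd : ∀ x ∈ L, ∀ y ∈ L, x + y ∈ L) (hneg : ∀ x ∈ L, -x ∈ L)
    (m n : ℕ) (A : Matrix (Fin m) (Fin n) ℤ) (b : Fin m → ℤ) (c : Fin n → ℚ)
    (τ : ℝ)
    (hopt : IsGreatest {t : ℝ | ∃ x : Fin n → ℝ,
      (∀ i, ∑ j, (A i j : ℝ) * x j ≤ (b i : ℝ)) ∧ t = ∑ j, (c j : ℝ) * x j} τ) :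
    (¬ ∃ x : Fin n → ℝ, (∀ i, ∑ j, (A i j : ℝ) * x j ≤ (b i : ℝ)) ∧
        (∑ j, (c j : ℝ) * x j = τ) ∧ ∀ j, x j ∈ L) ↔
      ∃ y u : Fin m → ℚ,
        (∀ i, u i ≠ 0 → y i ≠ 0) ∧
        ((∀ i, 0 ≤ y i) ∧ (∀ j, ∑ i, (A i j : ℚ) * y i = c j) ∧
          ((∑ i, (b i : ℚ) * y i : ℚ) : ℝ) = τ) ∧
        ((∀ j, ∃ zz : ℤ, ∑ i, (A i j : ℚ) * u i = (zz : ℚ)) ∧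
          ((∑ i, (b i : ℚ) * u i : ℚ) : ℝ) ∉ L) :=
  stmt_8_general L hdense hadd hneg m n A b c τ hopt
end

section
/- Let L be a dense subset of ℝ that is closed under addition and negation and contains ℤ. Let A be an m × n integer matrix, b ∈ ℤ^m, c ∈ ℤ^n, and suppose there exists x ∈ L^n with Ax ≤ b. Then the following are equivalent: (a) the set { cᵀx : Ax ≤ b, x ∈ L^n } is not bounded above; (b) the set { cᵀx : Ax ≤ b, x ∈ ℝ^n } is not bounded above; (c) there exists r ∈ ℤ^n with Ar ≤ 0 and cᵀr > 0. -/
open Finset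

lemma comb_sum {ι : Type*} [Fintype ι] (a g : ι → ℚ) (y' : ι ⊕ ι × ι → ℚ) :
    ∑ i, ((if a i = 0 then y' (Sum.inl i) else 0)
        + ∑ q, (if 0 < a i ∧ a q < 0 then y' (Sum.inr (i, q)) * (-(a q)) else 0)
        + ∑ p, (if 0 < a p ∧ a i < 0 then y' (Sum.inr (p, i)) * (a p) else 0)) * g i
    = ∑ i, y' (Sum.inl i) * (if a i = 0 then g i else 0)
      + ∑ pq : ι × ι, y' (Sum.inr pq) *
          (if 0 < a pq.1 ∧ a pq.2 < 0 then a pq.1 * g pq.2 - a pq.2 * g pq.1 else 0) := by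
  have key : ∀ i, ((if a i = 0 then y' (Sum.inl i) else 0)
        + ∑ q, (if 0 < a i ∧ a q < 0 then y' (Sum.inr (i, q)) * (-(a q)) else 0)
        + ∑ p, (if 0 < a p ∧ a i < 0 then y' (Sum.inr (p, i)) * (a p) else 0)) * g i
      = y' (Sum.inl i) * (if a i = 0 then g i else 0)
        + ∑ q, (if 0 < a i ∧ a q < 0 then y' (Sum.inr (i, q)) * (-(a q)) * g i else 0)
        + ∑ p, (if 0 < a p ∧ a i < 0 then y' (Sum.inr (p, i)) * (a p) * g i else 0) := by
    intro i
    rw [add_mul, add_mul, Finset.sum_mul, Finset.sum_mul]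
    congr 1
    · congr 1
      · split_ifs <;> ring
      · exact Finset.sum_congr rfl fun q _ => by split_ifs <;> ring
    · exact Finset.sum_congr rfl fun p _ => by split_ifs <;> ring
  rw [Finset.sum_congr rfl fun i _ => key i]
  rw [Finset.sum_add_distrib, Finset.sum_add_distrib]
  rw [Fintype.sum_prod_type]
  rw [add_assoc]
  congr 1
  rw [Finset.sum_comm (s := Finset.univ) (t := Finset.univ)
    (f := fun i p => (if 0 < a p ∧ a i < 0 then y' (Sum.inr (p, i)) * (a p) * g i else 0))]
  rw [← Finset.sum_add_distrib]
  refine Finset.sum_congr rfl fun p _ => ?_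
  rw [← Finset.sum_add_distrib]
  refine Finset.sum_congr rfl fun q _ => ?_
  split_ifs <;> ring

lemma farkasQ : ∀ (n : ℕ) (ι : Type) [Fintype ι] (A : ι → Fin n → ℚ) (b : ι → ℚ),
    (¬ ∃ x : Fin n → ℚ, ∀ i, ∑ j, A i j * x j ≤ b i) →
    ∃ y : ι → ℚ, (∀ i, 0 ≤ y i) ∧ (∀ j, ∑ i, y i * A i j = 0) ∧ ∑ i, y i * b i < 0 := by
  intro n
  induction n with
  | zero =>
    intro ι _ A b hinf
    classical
    push_neg at hinf
    obtain ⟨i0, hi0⟩ := hinf (fun j => j.elim0)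
    simp only [Finset.univ_eq_empty, Finset.sum_empty] at hi0
    refine ⟨fun i => if i = i0 then 1 else 0,
      fun i => by dsimp only; split_ifs <;> norm_num, fun j => j.elim0, ?_⟩
    simp only [ite_mul, one_mul, zero_mul, Finset.sum_ite_eq', Finset.mem_univ, if_pos]
    simpa using hi0
  | succ n IH =>
    intro ι _ A b hinf
    classical
    set a : ι → ℚ := fun i => A i (Fin.last n) with ha
    set A' : ι → Fin n → ℚ := fun i j => A i j.castSucc with hA'
    set B : (ι ⊕ ι × ι) → Fin n → ℚ := fun k j =>
      match k with
      | Sum.inl i => if a i = 0 then A' i j else 0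
      | Sum.inr (p, q) => if 0 < a p ∧ a q < 0 then a p * A' q j - a q * A' p j else 0
      with hB
    set d : (ι ⊕ ι × ι) → ℚ := fun k =>
      match k with
      | Sum.inl i => if a i = 0 then b i else 0
      | Sum.inr (p, q) => if 0 < a p ∧ a q < 0 then a p * b q - a q * b p else 0
      with hd
    have hnewinf : ¬ ∃ x : Fin n → ℚ, ∀ k, ∑ j, B k j * x j ≤ d k := by
      rintro ⟨x', hx'⟩
      set s : ι → ℚ := fun i => ∑ j, A' i j * x' j with hs
      have h0 : ∀ i, a i = 0 → s i ≤ b i := by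
        intro i hai
        have h := hx' (Sum.inl i)
        simp only [hB, hd, hai, if_true, eq_self_iff_true] at h
        simpa [hs, mul_comm] using h
      have hpq : ∀ p q, 0 < a p → a q < 0 →
          a p * s q - a q * s p ≤ a p * b q - a q * b p := by
        intro p q hp hq
        have h := hx' (Sum.inr (p, q))
        simp only [hB, hd, if_pos (And.intro hp hq)] at h
        calc a p * s q - a q * s p
            = ∑ j, (a p * A' q j - a q * A' p j) * x' j := by
              simp [hs, Finset.mul_sum, sub_mul, Finset.sum_sub_distrib, mul_assoc]
          _ ≤ a p * b q - a q * b p := h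
      have hT : ∃ t : ℚ, ∀ i, s i + a i * t ≤ b i := by
        by_cases hne : (Finset.univ.filter (fun q => a q < 0)).Nonempty
        · obtain ⟨q0, hq0mem, hq0max⟩ := Finset.exists_max_image
            (Finset.univ.filter (fun q => a q < 0)) (fun q => (b q - s q) / a q) hne
          have hq0 : a q0 < 0 := (Finset.mem_filter.mp hq0mem).2
          refine ⟨(b q0 - s q0) / a q0, fun i => ?_⟩
          rcases lt_trichotomy (a i) 0 with hlt | heq | hgt
          · have hle : (b i - s i) / a i ≤ (b q0 - s q0) / a q0 :=
              hq0max i (Finset.mem_filter.mpr ⟨Finset.mem_univ i, hlt⟩)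
            have h2 := mul_le_mul_of_nonpos_left hle (le_of_lt hlt)
            rw [mul_div_cancel₀ _ (ne_of_lt hlt)] at h2
            linarith
          · simpa [heq] using h0 i heq
          · have h1 := hpq i q0 hgt hq0
            have h2 : a i * ((b q0 - s q0) / a q0) ≤ b i - s i := by
              rw [mul_div_assoc', div_le_iff_of_neg hq0]
              nlinarith
            linarith
        · by_cases hpos : (Finset.univ.filter (fun p => 0 < a p)).Nonempty
          · obtain ⟨p0, hp0mem, hp0min⟩ := Finset.exists_min_image
              (Finset.univ.filter (fun p => 0 < a p)) (fun p => (b p - s p) / a p) hpos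
            have hp0 : 0 < a p0 := (Finset.mem_filter.mp hp0mem).2
            refine ⟨(b p0 - s p0) / a p0, fun i => ?_⟩
            rcases lt_trichotomy (a i) 0 with hlt | heq | hgt
            · exact absurd ⟨i, Finset.mem_filter.mpr ⟨Finset.mem_univ i, hlt⟩⟩ hne
            · simpa [heq] using h0 i heq
            · have hle : (b p0 - s p0) / a p0 ≤ (b i - s i) / a i :=
                hp0min i (Finset.mem_filter.mpr ⟨Finset.mem_univ i, hgt⟩)
              have h2 := mul_le_mul_of_nonneg_left hle (le_of_lt hgt)
              rw [mul_div_cancel₀ _ (ne_of_gt hgt)] at h2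
              linarith
          · refine ⟨0, fun i => ?_⟩
            rcases lt_trichotomy (a i) 0 with hlt | heq | hgt
            · exact absurd ⟨i, Finset.mem_filter.mpr ⟨Finset.mem_univ i, hlt⟩⟩ hne
            · simpa [heq] using h0 i heq
            · exact absurd ⟨i, Finset.mem_filter.mpr ⟨Finset.mem_univ i, hgt⟩⟩ hpos
      obtain ⟨t, ht⟩ := hT
      refine hinf ⟨Fin.snoc x' t, fun i => ?_⟩
      rw [Fin.sum_univ_castSucc]
      simp only [Fin.snoc_castSucc, Fin.snoc_last]
      exact ht i
    obtain ⟨y', hy'nn, hy'A, hy'b⟩ := IH (ι ⊕ ι × ι) B d hnewinf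
    set y : ι → ℚ := fun i => (if a i = 0 then y' (Sum.inl i) else 0)
        + ∑ q, (if 0 < a i ∧ a q < 0 then y' (Sum.inr (i, q)) * (-(a q)) else 0)
        + ∑ p, (if 0 < a p ∧ a i < 0 then y' (Sum.inr (p, i)) * (a p) else 0) with hy
    have hynn : ∀ i, 0 ≤ y i := by
      intro i
      refine add_nonneg (add_nonneg ?_ ?_) ?_
      · split_ifs
        · exact hy'nn _
        · exact le_refl 0
      · refine Finset.sum_nonneg fun q _ => ?_
        split_ifs with h
        · exact mul_nonneg (hy'nn _) (by linarith [h.2])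
        · exact le_refl 0
      · refine Finset.sum_nonneg fun p _ => ?_
        split_ifs with h
        · exact mul_nonneg (hy'nn _) (le_of_lt h.1)
        · exact le_refl 0
    have hcomb : ∀ g : ι → ℚ, ∑ i, y i * g i
        = ∑ i, y' (Sum.inl i) * (if a i = 0 then g i else 0)
          + ∑ pq : ι × ι, y' (Sum.inr pq) *
            (if 0 < a pq.1 ∧ a pq.2 < 0 then a pq.1 * g pq.2 - a pq.2 * g pq.1 else 0) :=
      fun g => comb_sum a g y'
    refine ⟨y, hynn, ?_, ?_⟩
    · intro j
      refine Fin.lastCases ?_ (fun j' => ?_) j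
      · rw [hcomb (fun i => A i (Fin.last n))]
        have e1 : ∀ i, y' (Sum.inl i) * (if a i = 0 then A i (Fin.last n) else 0) = 0 := by
          intro i
          rw [show A i (Fin.last n) = a i from rfl]
          split_ifs with h
          · rw [h, mul_zero]
          · rw [mul_zero]
        have e2 : ∀ pq : ι × ι, y' (Sum.inr pq) * (if 0 < a pq.1 ∧ a pq.2 < 0
            then a pq.1 * A pq.2 (Fin.last n) - a pq.2 * A pq.1 (Fin.last n) else 0) = 0 := by
          intro pq
          rw [show A pq.2 (Fin.last n) = a pq.2 from rfl,
            show A pq.1 (Fin.last n) = a pq.1 from rfl]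
          split_ifs with h
          · ring
          · rw [mul_zero]
        rw [Finset.sum_congr rfl fun i _ => e1 i, Finset.sum_congr rfl fun pq _ => e2 pq]
        simp
      · rw [hcomb (fun i => A' i j')]
        have h := hy'A j'
        rw [Fintype.sum_sum_type] at h
        exact h
    · rw [hcomb b]
      rw [Fintype.sum_sum_type] at hy'b
      exact hy'b

lemma exists_int_scale {n : ℕ} (r : Fin n → ℚ) :
    ∃ (N : ℕ), 0 < N ∧ ∀ j, ∃ z : ℤ, (z : ℚ) = (N : ℚ) * r j := by
  refine ⟨∏ j, (r j).den, Finset.prod_pos fun j _ => (r j).pos, fun j => ?_⟩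
  set N : ℕ := ∏ j, (r j).den with hN
  have hdvd : ((r j).den : ℤ) ∣ (N : ℤ) :=
    Int.natCast_dvd_natCast.mpr (Finset.dvd_prod_of_mem _ (Finset.mem_univ j))
  refine ⟨(N : ℤ) / (r j).den * (r j).num, ?_⟩
  have hcancel : (N : ℤ) / (r j).den * (r j).den = (N : ℤ) := Int.ediv_mul_cancel hdvd
  have hnum : ((r j).num : ℚ) = r j * (r j).den := by
    rw [mul_comm, Rat.den_mul_eq_num]
  calc (((N : ℤ) / (r j).den * (r j).num : ℤ) : ℚ)
      = (((N : ℤ) / (r j).den : ℤ) : ℚ) * ((r j).num : ℚ) := by push_cast; ring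
    _ = (((N : ℤ) / (r j).den : ℤ) : ℚ) * (r j * (r j).den) := by rw [hnum]
    _ = (((N : ℤ) / (r j).den * (r j).den : ℤ) : ℚ) * r j := by push_cast; ring
    _ = (N : ℚ) * r j := by rw [hcancel]; push_cast; ring

theorem stmt_10 (L : Set ℝ) (hdense : Dense L)
    (hadd : ∀ x ∈ L, ∀ y ∈ L, x + y ∈ L) (hneg : ∀ x ∈ L, -x ∈ L)
    (hZ : ∀ z : ℤ, (z : ℝ) ∈ L)
    (m n : ℕ) (A : Matrix (Fin m) (Fin n) ℤ) (b : Fin m → ℤ) (c : Fin n → ℤ)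
    (hfeas : ∃ x : Fin n → ℝ, (∀ j, x j ∈ L) ∧ ∀ i, ∑ j, (A i j : ℝ) * x j ≤ (b i : ℝ)) :
    ((¬ BddAbove {t : ℝ | ∃ x : Fin n → ℝ, (∀ j, x j ∈ L) ∧
        (∀ i, ∑ j, (A i j : ℝ) * x j ≤ (b i : ℝ)) ∧ t = ∑ j, (c j : ℝ) * x j}) ↔
      (¬ BddAbove {t : ℝ | ∃ x : Fin n → ℝ,
        (∀ i, ∑ j, (A i j : ℝ) * x j ≤ (b i : ℝ)) ∧ t = ∑ j, (c j : ℝ) * x j})) ∧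
    ((¬ BddAbove {t : ℝ | ∃ x : Fin n → ℝ,
        (∀ i, ∑ j, (A i j : ℝ) * x j ≤ (b i : ℝ)) ∧ t = ∑ j, (c j : ℝ) * x j}) ↔
      (∃ r : Fin n → ℤ, (∀ i, ∑ j, A i j * r j ≤ 0) ∧ 0 < ∑ j, c j * r j)) := by
  classical
  obtain ⟨x₀, hx₀L, hx₀f⟩ := hfeas
  set SL : Set ℝ := {t : ℝ | ∃ x : Fin n → ℝ, (∀ j, x j ∈ L) ∧
      (∀ i, ∑ j, (A i j : ℝ) * x j ≤ (b i : ℝ)) ∧ t = ∑ j, (c j : ℝ) * x j} with hSL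
  set SR : Set ℝ := {t : ℝ | ∃ x : Fin n → ℝ,
      (∀ i, ∑ j, (A i j : ℝ) * x j ≤ (b i : ℝ)) ∧ t = ∑ j, (c j : ℝ) * x j} with hSR
  -- (c) → ¬ BddAbove SL
  have himp_c_L : (∃ r : Fin n → ℤ, (∀ i, ∑ j, A i j * r j ≤ 0) ∧ 0 < ∑ j, c j * r j) →
      ¬ BddAbove SL := by
    rintro ⟨r, hr1, hr2⟩
    rw [not_bddAbove_iff]
    intro M
    obtain ⟨K, hK⟩ := exists_nat_gt (M - ∑ j, (c j : ℝ) * x₀ j)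
    refine ⟨∑ j, (c j : ℝ) * (x₀ j + (K : ℝ) * (r j : ℝ)),
      ⟨fun j => x₀ j + (K : ℝ) * (r j : ℝ), ?_, ?_, rfl⟩, ?_⟩
    · intro j
      show x₀ j + (K : ℝ) * (r j : ℝ) ∈ L
      have he : x₀ j + (K : ℝ) * (r j : ℝ) = x₀ j + (((K : ℤ) * r j : ℤ) : ℝ) := by
        push_cast; ring
      rw [he]
      exact hadd _ (hx₀L j) _ (hZ _)
    · intro i
      have hAr : ((∑ j, A i j * r j : ℤ) : ℝ) ≤ 0 := by exact_mod_cast hr1 i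
      have he : ∑ j, (A i j : ℝ) * (x₀ j + (K : ℝ) * (r j : ℝ))
          = ∑ j, (A i j : ℝ) * x₀ j + (K : ℝ) * ((∑ j, A i j * r j : ℤ) : ℝ) := by
        push_cast
        rw [Finset.mul_sum, ← Finset.sum_add_distrib]
        exact Finset.sum_congr rfl fun j _ => by ring
      rw [he]
      have hx := hx₀f i
      nlinarith [Nat.cast_nonneg (α := ℝ) K]
    · have he : ∑ j, (c j : ℝ) * (x₀ j + (K : ℝ) * (r j : ℝ))
          = ∑ j, (c j : ℝ) * x₀ j + (K : ℝ) * ((∑ j, c j * r j : ℤ) : ℝ) := by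
        push_cast
        rw [Finset.mul_sum, ← Finset.sum_add_distrib]
        exact Finset.sum_congr rfl fun j _ => by ring
      rw [he]
      have h1 : (1 : ℝ) ≤ ((∑ j, c j * r j : ℤ) : ℝ) := by exact_mod_cast hr2
      nlinarith [Nat.cast_nonneg (α := ℝ) K,
        mul_le_mul_of_nonneg_left h1 (Nat.cast_nonneg (α := ℝ) K)]
  -- ¬ BddAbove SL → ¬ BddAbove SR
  have himp_L_R : ¬ BddAbove SL → ¬ BddAbove SR := by
    intro h hR
    exact h (hR.mono (by rintro t ⟨x, _, hxf, ht⟩; exact ⟨x, hxf, ht⟩))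
  -- ¬ BddAbove SR → (c)
  have himp_R_c : ¬ BddAbove SR →
      (∃ r : Fin n → ℤ, (∀ i, ∑ j, A i j * r j ≤ 0) ∧ 0 < ∑ j, c j * r j) := by
    intro hR
    by_contra hnc
    push_neg at hnc
    apply hR
    set M : (Fin m ⊕ Unit) → Fin n → ℚ := fun k j =>
      match k with
      | Sum.inl i => (A i j : ℚ)
      | Sum.inr _ => -(c j : ℚ)
      with hM
    set dd : (Fin m ⊕ Unit) → ℚ := fun k =>
      match k with
      | Sum.inl _ => 0
      | Sum.inr _ => -1
      with hdd
    have hinf : ¬ ∃ x : Fin n → ℚ, ∀ k, ∑ j, M k j * x j ≤ dd k := by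
      rintro ⟨rq, hrq⟩
      obtain ⟨N, hN, hz⟩ := exists_int_scale rq
      choose z hzq using hz
      have hA : ∀ i, ∑ j, A i j * z j ≤ 0 := by
        intro i
        have h : ∑ j, (A i j : ℚ) * rq j ≤ 0 := hrq (Sum.inl i)
        have he : ((∑ j, A i j * z j : ℤ) : ℚ) = (N : ℚ) * ∑ j, (A i j : ℚ) * rq j := by
          push_cast
          rw [Finset.mul_sum]
          refine Finset.sum_congr rfl fun j _ => ?_
          rw [hzq j]; ring
        have h2 : ((∑ j, A i j * z j : ℤ) : ℚ) ≤ 0 := by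
          rw [he]
          exact mul_nonpos_of_nonneg_of_nonpos (by positivity) h
        exact_mod_cast h2
      have hcz : 0 < ∑ j, c j * z j := by
        have h : ∑ j, -(c j : ℚ) * rq j ≤ -1 := hrq (Sum.inr ())
        have h' : (1 : ℚ) ≤ ∑ j, (c j : ℚ) * rq j := by
          have : ∑ j, -(c j : ℚ) * rq j = -∑ j, (c j : ℚ) * rq j := by
            rw [← Finset.sum_neg_distrib]
            exact Finset.sum_congr rfl fun j _ => by ring
          rw [this] at h
          linarith
        have he : ((∑ j, c j * z j : ℤ) : ℚ) = (N : ℚ) * ∑ j, (c j : ℚ) * rq j := by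
          push_cast
          rw [Finset.mul_sum]
          refine Finset.sum_congr rfl fun j _ => ?_
          rw [hzq j]; ring
        have h2 : (0 : ℚ) < ((∑ j, c j * z j : ℤ) : ℚ) := by
          rw [he]
          have hN' : (0 : ℚ) < (N : ℚ) := by exact_mod_cast hN
          nlinarith
        exact_mod_cast h2
      exact absurd hcz (not_lt.mpr (hnc z hA))
    obtain ⟨y, hynn, hyA, hyb⟩ := farkasQ n (Fin m ⊕ Unit) M dd hinf
    set μ : ℚ := y (Sum.inr ()) with hμdef
    have hμ : 0 < μ := by
      rw [Fintype.sum_sum_type] at hyb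
      simp only [hdd] at hyb
      simp at hyb
      linarith
    have hcj : ∀ j, (c j : ℚ) = ∑ i, (y (Sum.inl i) / μ) * (A i j : ℚ) := by
      intro j
      have h := hyA j
      rw [Fintype.sum_sum_type] at h
      simp only [hM] at h
      simp at h
      have he : ∑ i, (y (Sum.inl i) / μ) * (A i j : ℚ)
          = (∑ i, y (Sum.inl i) * (A i j : ℚ)) / μ := by
        rw [Finset.sum_div]
        exact Finset.sum_congr rfl fun i _ => by ring
      rw [he]
      rw [eq_div_iff (ne_of_gt hμ)]
      linarith
    refine ⟨∑ i, ((y (Sum.inl i) / μ : ℚ) : ℝ) * (b i : ℝ), ?_⟩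
    rintro t ⟨x, hxf, rfl⟩
    have hcR : ∀ j, (c j : ℝ) = ∑ i, ((y (Sum.inl i) / μ : ℚ) : ℝ) * (A i j : ℝ) := by
      intro j
      have := hcj j
      have h2 : ((c j : ℚ) : ℝ) = ((∑ i, (y (Sum.inl i) / μ) * (A i j : ℚ) : ℚ) : ℝ) := by
        exact_mod_cast congrArg (fun q : ℚ => (q : ℝ)) this
      push_cast at h2
      exact_mod_cast h2
    calc ∑ j, (c j : ℝ) * x j
        = ∑ j, (∑ i, ((y (Sum.inl i) / μ : ℚ) : ℝ) * (A i j : ℝ)) * x j := by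
          exact Finset.sum_congr rfl fun j _ => by rw [← hcR j]
      _ = ∑ j, ∑ i, ((y (Sum.inl i) / μ : ℚ) : ℝ) * (A i j : ℝ) * x j :=
          Finset.sum_congr rfl fun j _ => by rw [Finset.sum_mul]
      _ = ∑ i, ∑ j, ((y (Sum.inl i) / μ : ℚ) : ℝ) * (A i j : ℝ) * x j := Finset.sum_comm
      _ = ∑ i, ((y (Sum.inl i) / μ : ℚ) : ℝ) * ∑ j, (A i j : ℝ) * x j := by
          refine Finset.sum_congr rfl fun i _ => ?_
          rw [Finset.mul_sum]
          exact Finset.sum_congr rfl fun j _ => by ring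
      _ ≤ ∑ i, ((y (Sum.inl i) / μ : ℚ) : ℝ) * (b i : ℝ) := by
          refine Finset.sum_le_sum fun i _ => ?_
          refine mul_le_mul_of_nonneg_left (hxf i) ?_
          have : (0:ℚ) ≤ y (Sum.inl i) / μ := div_nonneg (hynn _) (le_of_lt hμ)
          exact_mod_cast this
  constructor
  · exact ⟨himp_L_R, fun hR => himp_c_L (himp_R_c hR)⟩
  · exact ⟨himp_R_c, fun hr => himp_L_R (himp_c_L hr)⟩
end

section
/- Let L be a dense subset of ℝ that is closed under addition and negation and contains ℤ. Let A be an m × n integer matrix, b ∈ ℤ^m, c ∈ ℤ^n. If there exists x ∈ L^n with Ax ≤ b and the set { cᵀx : Ax ≤ b, x ∈ L^n } is bounded above, then sup{ cᵀx : Ax ≤ b, x ∈ L^n } = sup{ cᵀx : Ax ≤ b, x ∈ ℝ^n }. -/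
/-!
Let `P = {x | A x ≤ b}` and let `x₀ ∈ P ∩ Lⁿ`. Averaging witnesses gives a point of `P` at which
every row that is strict somewhere on `P` is strict; moving a point `y ∈ P` slightly towards it
makes all those rows strict while the remaining rows stay tight. Such a point `q` differs from `x₀`
by a vector of the kernel of the tight rows, and since those rows are integral this kernel is
spanned by integer vectors `uₖ`. Writing `q = x₀ + ∑ cₖ uₖ` and replacing each `cₖ` by a nearby
element of the dense subgroup `L` gives a point of `P ∩ Lⁿ` close to `q`. Hence `P ∩ Lⁿ` is dense
in `P`, and by continuity the two suprema of `cᵀx` agree.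
-/

open Set Submodule

section Polyhedron

variable {𝕜 V ι : Type*} [Field 𝕜] [LinearOrder 𝕜] [IsStrictOrderedRing 𝕜]
  [AddCommGroup V] [Module 𝕜 V]

def polyhedron (a : ι → V →ₗ[𝕜] 𝕜) (b : ι → 𝕜) : Set V := {x | ∀ i, a i x ≤ b i}

theorem convex_polyhedron (a : ι → V →ₗ[𝕜] 𝕜) (b : ι → 𝕜) : Convex 𝕜 (polyhedron a b) := by
  simpa only [polyhedron, ofPred_forall] using
    convex_iInter fun i => convex_halfSpace_le (a i).isLinear (b i)

theorem LinearMap.map_add_smul_lt (f : V →ₗ[𝕜] 𝕜) {x w : V} {r s t : 𝕜} (hx : f x ≤ r)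
    (hw : f w < r) (hs : 0 ≤ s) (ht : 0 < t) (hst : s + t = 1) : f (s • x + t • w) < r := by
  rw [map_add, map_smul, map_smul, smul_eq_mul, smul_eq_mul]
  calc s * f x + t * f w < s * r + t * r :=
        add_lt_add_of_le_of_lt (mul_le_mul_of_nonneg_left hx hs) (mul_lt_mul_of_pos_left hw ht)
    _ = r := by rw [← add_mul, hst, one_mul]

theorem exists_mem_polyhedron_forall_lt {a : ι → V →ₗ[𝕜] 𝕜} {b : ι → 𝕜} (s : Finset ι)
    (hP : (polyhedron a b).Nonempty) (hs : ∀ i ∈ s, ∃ x ∈ polyhedron a b, a i x < b i) :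
    ∃ x ∈ polyhedron a b, ∀ i ∈ s, a i x < b i := by
  classical
  induction s using Finset.induction_on with
  | empty =>
    obtain ⟨x, hx⟩ := hP
    exact ⟨x, hx, by simp⟩
  | insert i s _ ih =>
    obtain ⟨x, hxP, hx⟩ := ih fun k hk => hs k (Finset.mem_insert_of_mem hk)
    obtain ⟨w, hwP, hw⟩ := hs i (Finset.mem_insert_self i s)
    have h2 : (0 : 𝕜) < 1 / 2 := by norm_num
    have h22 : (1 / 2 : 𝕜) + 1 / 2 = 1 := by norm_num
    refine ⟨(1 / 2 : 𝕜) • x + (1 / 2 : 𝕜) • w,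
      convex_polyhedron a b hxP hwP h2.le h2.le h22, (Finset.forall_mem_insert _ _ _).2 ⟨?_, ?_⟩⟩
    · exact (a i).map_add_smul_lt (hxP i) hw h2.le h2 h22
    · intro k hk
      rw [add_comm]
      exact (a k).map_add_smul_lt (hwP k) (hx k hk) h2.le h2 h22

theorem mem_closure_setOf_forall_lt [TopologicalSpace 𝕜] [OrderTopology 𝕜] [TopologicalSpace V]
    [ContinuousAdd V] [ContinuousSMul 𝕜 V] {a : ι → V →ₗ[𝕜] 𝕜} {b : ι → 𝕜} {s : Set ι} {x y : V}
    (hx : x ∈ polyhedron a b) (hxs : ∀ i ∈ s, a i x < b i) (hy : y ∈ polyhedron a b) :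
    y ∈ closure {z ∈ polyhedron a b | ∀ i ∈ s, a i z < b i} := by
  refine closure_mono ?_ (segment_subset_closure_openSegment (left_mem_segment 𝕜 y x))
  rintro _ ⟨p, q, hp, hq, hpq, rfl⟩
  exact ⟨convex_polyhedron a b hy hx hp.le hq.le hpq,
    fun i hi => (a i).map_add_smul_lt (hy i) (hxs i hi) hp.le hq hpq⟩

end Polyhedron

section IntegralSpan

variable {K V ι : Type*} [Field K] [AddCommGroup V] [Module K V]

theorem mem_span_inf_ker_of_mem_span (Λ : AddSubgroup V) (g : V →ₗ[K] K)
    (hg : ∀ u ∈ Λ, g u ∈ range ((↑) : ℤ → K)) {v : V} (hv : v ∈ span K (Λ : Set V))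
    (hgv : g v = 0) :
    v ∈ span K ((Λ ⊓ (LinearMap.ker g).toAddSubgroup : AddSubgroup V) : Set V) := by
  by_cases hΛ : ∀ u ∈ Λ, g u = 0
  · exact span_mono (fun u hu => AddSubgroup.mem_inf.2 ⟨hu, hΛ u hu⟩) hv
  push Not at hΛ
  obtain ⟨u₀, hu₀, hgu₀⟩ := hΛ
  obtain ⟨k₀, hk₀⟩ := hg u₀ hu₀
  -- `π` projects onto `ker g` along `u₀`, sending `u ∈ Λ` to a multiple of
  -- `(g u₀) • u - (g u) • u₀ ∈ Λ ∩ ker g` (both coefficients are integers).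
  let π : V →ₗ[K] V := LinearMap.id - ((g u₀)⁻¹ • g).smulRight u₀
  have hπ : ∀ x, π x = x - ((g u₀)⁻¹ * g x) • u₀ := fun x => by simp [π]
  have hπΛ : ∀ u ∈ Λ,
      π u ∈ span K ((Λ ⊓ (LinearMap.ker g).toAddSubgroup : AddSubgroup V) : Set V) := by
    intro u hu
    obtain ⟨k, hk⟩ := hg u hu
    have hw : k₀ • u - k • u₀ ∈ Λ ⊓ (LinearMap.ker g).toAddSubgroup := by
      refine AddSubgroup.mem_inf.2 ⟨sub_mem (zsmul_mem hu k₀) (zsmul_mem hu₀ k), ?_⟩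
      rw [Submodule.mem_toAddSubgroup, LinearMap.mem_ker, map_sub, map_zsmul, map_zsmul, ← hk,
        ← hk₀, zsmul_eq_mul, zsmul_eq_mul, mul_comm, sub_self]
    have hπu : π u = (g u₀)⁻¹ • (k₀ • u - k • u₀) := by
      rw [hπ, ← Int.cast_smul_eq_zsmul K, ← Int.cast_smul_eq_zsmul K, hk, hk₀, smul_sub, smul_smul,
        inv_mul_cancel₀ hgu₀, one_smul, smul_smul]
    rw [hπu]
    exact smul_mem _ _ (subset_span hw)
  simpa [hπ, hgv] using (span_le (p := (span K _).comap π)).2 hπΛ hv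

theorem mem_span_setOf_forall_eq_zero (Λ : AddSubgroup V) (g : ι → V →ₗ[K] K) (s : Finset ι)
    (hg : ∀ i ∈ s, ∀ u ∈ Λ, g i u ∈ range ((↑) : ℤ → K)) {v : V} (hv : v ∈ span K (Λ : Set V))
    (hgv : ∀ i ∈ s, g i v = 0) : v ∈ span K {u | u ∈ Λ ∧ ∀ i ∈ s, g i u = 0} := by
  classical
  induction s using Finset.induction_on generalizing Λ with
  | empty => simpa using hv
  | insert i s _ ih =>
    rw [Finset.forall_mem_insert] at hg hgv
    refine span_mono ?_ <| ih (Λ ⊓ (LinearMap.ker (g i)).toAddSubgroup)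
      (fun k hk u hu => hg.2 k hk u hu.1) (mem_span_inf_ker_of_mem_span Λ (g i) hg.1 hv hgv.1) hgv.2
    rintro u ⟨⟨huΛ, hui⟩, hus⟩
    exact ⟨huΛ, (Finset.forall_mem_insert _ _ _).2 ⟨hui, hus⟩⟩

end IntegralSpan

section DenseSubgroup

variable {J : Type*}

def intLattice (J : Type*) : AddSubgroup (J → ℝ) := ((Int.castAddHom ℝ).compLeft J).range

theorem mem_intLattice {u : J → ℝ} :
    u ∈ intLattice J ↔ ∃ k : J → ℤ, (fun j => (k j : ℝ)) = u :=
  Iff.rfl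

theorem span_intLattice [Fintype J] : span ℝ (intLattice J : Set (J → ℝ)) = ⊤ := by
  classical
  refine eq_top_iff.2 fun x _ => (pi_eq_sum_univ x).symm ▸ sum_mem fun i _ => smul_mem _ _ ?_
  exact subset_span (mem_intLattice.2 ⟨fun j => if i = j then 1 else 0, by simp⟩)

theorem smul_mem_pi_of_mem_intLattice (G : AddSubgroup ℝ) {ℓ : ℝ} (hℓ : ℓ ∈ G) {u : J → ℝ}
    (hu : u ∈ intLattice J) : ℓ • u ∈ AddSubgroup.pi univ fun _ => G := by
  obtain ⟨k, rfl⟩ := mem_intLattice.1 hu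
  refine (AddSubgroup.mem_pi _).2 fun j _ => ?_
  rw [Pi.smul_apply, smul_eq_mul, mul_comm, ← zsmul_eq_mul]
  exact zsmul_mem hℓ _

theorem mem_closure_of_sub_mem_span {G : AddSubgroup ℝ} (hG : Dense (G : Set ℝ))
    {T : Set (J → ℝ)} (hT : T ⊆ intLattice J) {x₀ q : J → ℝ}
    (hx₀ : x₀ ∈ AddSubgroup.pi univ fun _ => G) (hq : q - x₀ ∈ span ℝ T) {O : Set (J → ℝ)}
    (hO : IsOpen O) (hqO : q ∈ O) :
    q ∈ closure (O ∩ {x | x ∈ AddSubgroup.pi univ (fun _ => G) ∧ x - x₀ ∈ span ℝ T}) := by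
  obtain ⟨k, c, u, hcu⟩ := mem_span_set'.1 hq
  let φ : (Fin k → ℝ) → J → ℝ := fun ℓ => x₀ + ∑ i, ℓ i • (u i : J → ℝ)
  have hφ : Continuous φ := by fun_prop
  have hqφ : q ∈ closure (φ '' (AddSubgroup.pi univ fun _ => G : AddSubgroup (Fin k → ℝ))) := by
    refine image_closure_subset_closure_image hφ ⟨c, ?_, by simp [φ, hcu]⟩
    rw [AddSubgroup.coe_pi, (dense_pi univ fun _ _ => hG).closure_eq]
    trivial
  refine closure_mono ?_ (hO.inter_closure ⟨hqO, hqφ⟩)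
  rintro _ ⟨hxO, ℓ, hℓ, rfl⟩
  refine ⟨hxO, add_mem hx₀ (sum_mem fun i _ => ?_), ?_⟩
  · exact smul_mem_pi_of_mem_intLattice G ((AddSubgroup.mem_pi _).1 hℓ i trivial) (hT (u i).2)
  · simpa [φ] using sum_mem fun i _ => smul_mem _ (ℓ i) (subset_span (u i).2)

end DenseSubgroup

theorem polyhedron_subset_closure_inter_pi {ι J : Type*} [Fintype ι] [Fintype J]
    {G : AddSubgroup ℝ} (hG : Dense (G : Set ℝ)) {a : ι → (J → ℝ) →ₗ[ℝ] ℝ} {b : ι → ℝ}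
    (ha : ∀ i, ∀ u ∈ intLattice J, a i u ∈ range ((↑) : ℤ → ℝ)) {x₀ : J → ℝ}
    (hx₀ : x₀ ∈ polyhedron a b) (hx₀G : x₀ ∈ AddSubgroup.pi univ fun _ => G) :
    polyhedron a b ⊆ closure (polyhedron a b ∩ AddSubgroup.pi univ fun _ : J => G) := by
  classical
  let S : Finset ι := Finset.univ.filter fun i => ∃ x ∈ polyhedron a b, a i x < b i
  have htight : ∀ i ∉ S, ∀ x ∈ polyhedron a b, a i x = b i := fun i hi x hx =>
    (hx i).eq_of_not_lt fun hlt => hi (Finset.mem_filter.2 ⟨Finset.mem_univ i, x, hx, hlt⟩)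
  obtain ⟨x₁, hx₁, hx₁S⟩ := exists_mem_polyhedron_forall_lt S ⟨x₀, hx₀⟩
    fun i hi => (Finset.mem_filter.1 hi).2
  intro y hy
  refine closure_minimal ?_ isClosed_closure (mem_closure_setOf_forall_lt hx₁ hx₁S hy)
  rintro q ⟨hq, hqS⟩
  let T : Set (J → ℝ) := {u | u ∈ intLattice J ∧ ∀ i ∈ Sᶜ, a i u = 0}
  have hqT : q - x₀ ∈ span ℝ T := by
    refine mem_span_setOf_forall_eq_zero _ a Sᶜ (fun i _ => ha i) (by simp [span_intLattice])
      fun i hi => ?_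
    rw [map_sub, htight i (Finset.mem_compl.1 hi) q hq, htight i (Finset.mem_compl.1 hi) x₀ hx₀,
      sub_self]
  have hO : IsOpen {x | ∀ i ∈ S, a i x < b i} := by
    simp only [ofPred_forall]
    exact isOpen_biInter_finset fun i _ =>
      isOpen_lt (a i).continuous_of_finiteDimensional continuous_const
  refine closure_mono ?_ (mem_closure_of_sub_mem_span hG (fun u hu => hu.1) hx₀G hqT hO hqS)
  rintro x ⟨hxS, hxG, hxT⟩
  refine ⟨fun i => ?_, hxG⟩
  by_cases hi : i ∈ S
  · exact (hxS i hi).le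
  · have hT : T ⊆ LinearMap.ker (a i) := fun u hu => hu.2 i (Finset.mem_compl.2 hi)
    have : a i (x - x₀) = 0 := span_le.2 hT hxT
    rw [map_sub, sub_eq_zero] at this
    rw [this, htight i hi x₀ hx₀]

theorem stmt_12_general (L : Set ℝ) (hdense : Dense L)
    (hadd : ∀ x ∈ L, ∀ y ∈ L, x + y ∈ L) (hneg : ∀ x ∈ L, -x ∈ L)
    (m n : ℕ) (A : Matrix (Fin m) (Fin n) ℤ) (b : Fin m → ℤ) (c : Fin n → ℤ)
    (hfeas : ∃ x : Fin n → ℝ, (∀ j, x j ∈ L) ∧ ∀ i, ∑ j, (A i j : ℝ) * x j ≤ (b i : ℝ))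
    (hbdd : BddAbove {t : ℝ | ∃ x : Fin n → ℝ, (∀ j, x j ∈ L) ∧
      (∀ i, ∑ j, (A i j : ℝ) * x j ≤ (b i : ℝ)) ∧ t = ∑ j, (c j : ℝ) * x j}) :
    sSup {t : ℝ | ∃ x : Fin n → ℝ, (∀ j, x j ∈ L) ∧
        (∀ i, ∑ j, (A i j : ℝ) * x j ≤ (b i : ℝ)) ∧ t = ∑ j, (c j : ℝ) * x j} =
      sSup {t : ℝ | ∃ x : Fin n → ℝ,
        (∀ i, ∑ j, (A i j : ℝ) * x j ≤ (b i : ℝ)) ∧ t = ∑ j, (c j : ℝ) * x j} := by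
  have h0 : (0 : ℝ) ∈ L := by
    obtain ⟨x, hx⟩ := hdense.nonempty
    simpa using hadd x hx _ (hneg x hx)
  let G : AddSubgroup ℝ :=
    { carrier := L, add_mem' := fun hx hy => hadd _ hx _ hy, zero_mem' := h0,
      neg_mem' := fun hx => hneg _ hx }
  let a : Fin m → (Fin n → ℝ) →ₗ[ℝ] ℝ := fun i => .proj i ∘ₗ (A.map (↑)).mulVecLin
  let f : (Fin n → ℝ) → ℝ := fun x => ∑ j, (c j : ℝ) * x j
  have hf : Continuous f := by fun_prop
  have ha : ∀ i, ∀ u ∈ intLattice (Fin n), a i u ∈ range ((↑) : ℤ → ℝ) := by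
    rintro i u hu
    obtain ⟨k, rfl⟩ := mem_intLattice.1 hu
    exact ⟨∑ j, A i j * k j, by simp [a, Matrix.mulVec, dotProduct]⟩
  obtain ⟨x₀, hx₀G, hx₀⟩ := hfeas
  have hle : ∀ y ∈ polyhedron a (fun i => (b i : ℝ)), f y ≤ sSup _ := fun y hy =>
    closure_minimal (s := polyhedron a _ ∩ AddSubgroup.pi univ fun _ : Fin n => G)
      (fun x hx => le_csSup hbdd ⟨x, fun j => hx.2 j trivial, hx.1, rfl⟩)
      (isClosed_le hf continuous_const)
      (polyhedron_subset_closure_inter_pi hdense ha hx₀ (fun j _ => hx₀G j) hy)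
  apply le_antisymm
  · refine csSup_le_csSup ⟨_, fun t ⟨x, hx, ht⟩ => ht.le.trans (hle x hx)⟩
      ⟨_, x₀, hx₀G, hx₀, rfl⟩ ?_
    rintro _ ⟨x, -, hx, rfl⟩
    exact ⟨x, hx, rfl⟩
  · refine csSup_le ⟨_, x₀, hx₀, rfl⟩ ?_
    rintro _ ⟨x, hx, rfl⟩
    exact hle x hx

theorem stmt_12 (L : Set ℝ) (hdense : Dense L)
    (hadd : ∀ x ∈ L, ∀ y ∈ L, x + y ∈ L) (hneg : ∀ x ∈ L, -x ∈ L)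
    (hZ : ∀ z : ℤ, (z : ℝ) ∈ L)
    (m n : ℕ) (A : Matrix (Fin m) (Fin n) ℤ) (b : Fin m → ℤ) (c : Fin n → ℤ)
    (hfeas : ∃ x : Fin n → ℝ, (∀ j, x j ∈ L) ∧ ∀ i, ∑ j, (A i j : ℝ) * x j ≤ (b i : ℝ))
    (hbdd : BddAbove {t : ℝ | ∃ x : Fin n → ℝ, (∀ j, x j ∈ L) ∧
      (∀ i, ∑ j, (A i j : ℝ) * x j ≤ (b i : ℝ)) ∧ t = ∑ j, (c j : ℝ) * x j}) :
    sSup {t : ℝ | ∃ x : Fin n → ℝ, (∀ j, x j ∈ L) ∧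
        (∀ i, ∑ j, (A i j : ℝ) * x j ≤ (b i : ℝ)) ∧ t = ∑ j, (c j : ℝ) * x j} =
      sSup {t : ℝ | ∃ x : Fin n → ℝ,
        (∀ i, ∑ j, (A i j : ℝ) * x j ≤ (b i : ℝ)) ∧ t = ∑ j, (c j : ℝ) * x j} :=
  stmt_12_general L hdense hadd hneg m n A b c hfeas hbdd
end

section
/- Let p be a prime, A an m × n integer matrix of full row rank, and b ∈ ℤ^m. Suppose there exists a nonnegative integer k and x ∈ ℝ^n with p^k x ∈ ℤ^n and Ax = b, and let κ be the smallest such nonnegative integer. Then p^κ divides gcd(A), the greatest common divisor of the determinants of all m × m column-submatrices of A. -/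
theorem stmt_14 (p : ℕ) (hp : p.Prime)
    (m n : ℕ) (A : Matrix (Fin m) (Fin n) ℤ)
    (hrank : LinearIndependent ℚ (fun i : Fin m => fun j : Fin n => (A i j : ℚ)))
    (b : Fin m → ℤ) (κ : ℕ)
    (hκ : IsLeast {k : ℕ | ∃ x : Fin n → ℝ,
        (∀ j, ∃ a : ℤ, (p : ℝ) ^ k * x j = (a : ℝ)) ∧
        (∀ i, ∑ j, (A i j : ℝ) * x j = (b i : ℝ))} κ) :
    (p : ℤ) ^ κ ∣
      Finset.gcd (Finset.univ.filter fun f : Fin m → Fin n => Function.Injective f)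
        (fun f => (A.submatrix id f).det) := by
  obtain ⟨hmem, hlb⟩ := hκ
  apply Finset.dvd_gcd
  intro f hf
  by_contra hndvd
  set d := (A.submatrix id f).det with hd
  have hκpos : 1 ≤ κ := by
    rcases Nat.eq_zero_or_pos κ with h | h
    · exact absurd (by simp [h]) hndvd
    · exact h
  have hd0 : d ≠ 0 := by
    intro h
    exact hndvd (h ▸ dvd_zero _)
  set t := d.natAbs.factorization p with ht
  have hpt : (p : ℤ) ^ t ∣ d := by
    have h1 : (p : ℕ) ^ t ∣ d.natAbs := Nat.ordProj_dvd d.natAbs p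
    have h2 : (p : ℤ) ^ t ∣ (d.natAbs : ℤ) := by exact_mod_cast h1
    exact Int.dvd_natAbs.mp h2
  obtain ⟨e, he⟩ := hpt
  have hpe : ¬ (p : ℤ) ∣ e := by
    intro hdvd
    have h2 : (p : ℤ) ^ (t + 1) ∣ d := by
      rw [he, pow_succ]
      exact mul_dvd_mul_left _ hdvd
    have h3 : (p : ℕ) ^ (t + 1) ∣ d.natAbs := by
      have h4 := Int.natAbs_dvd_natAbs.mpr h2
      simp only [Int.natAbs_pow, Int.natAbs_natCast] at h4
      exact h4
    exact Nat.pow_succ_factorization_not_dvd (Int.natAbs_ne_zero.mpr hd0) hp h3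
  have htκ : t < κ := by
    by_contra h
    push_neg at h
    exact hndvd ((pow_dvd_pow _ h).trans ⟨e, he⟩)
  obtain ⟨s, hs⟩ : ∃ s, κ = t + s + 1 := ⟨κ - t - 1, by omega⟩
  have hcop : IsCoprime ((p : ℤ) ^ (s + 1)) e := by
    have hpint : Prime (p : ℤ) := Nat.prime_iff_prime_int.mp hp
    exact (hpint.coprime_iff_not_dvd.mpr hpe).pow_left
  obtain ⟨u0, v0, huv⟩ := hcop
  -- extract integer solution from hmem
  obtain ⟨x, hx1, hx2⟩ := hmem
  choose a ha using hx1
  have hy : ∀ i, ∑ j, A i j * a j = p ^ κ * b i := by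
    intro i
    have hcast : ((∑ j, A i j * a j : ℤ) : ℝ) = ((p ^ κ * b i : ℤ) : ℝ) := by
      push_cast
      calc (∑ j, (A i j : ℝ) * (a j : ℝ))
          = ∑ j, (A i j : ℝ) * ((p : ℝ) ^ κ * x j) := by
            refine Finset.sum_congr rfl fun j _ => ?_
            rw [ha j]
        _ = (p : ℝ) ^ κ * ∑ j, (A i j : ℝ) * x j := by
            rw [Finset.mul_sum]; refine Finset.sum_congr rfl fun j _ => by ring
        _ = (p : ℝ) ^ κ * b i := by rw [hx2 i]
    exact_mod_cast hcast
  set B := A.submatrix id f with hB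
  set c := B.adjugate.mulVec b with hc
  have hBc : ∀ i, ∑ i', A i (f i') * c i' = d * b i := by
    intro i
    have h1 : B.mulVec c = d • b := by
      rw [hc, Matrix.mulVec_mulVec, Matrix.mul_adjugate, ← hd, Matrix.smul_mulVec,
        Matrix.one_mulVec]
    have := congrFun h1 i
    simpa [Matrix.mulVec, dotProduct, hB, Matrix.submatrix_apply] using this
  set α := v0 * (p : ℤ) ^ s with hα
  set β := u0 * (p : ℤ) ^ s with hβ
  have hkey : α * d + β * (p : ℤ) ^ κ = (p : ℤ) ^ (κ - 1) := by
    have h1 : κ - 1 = t + s := by omega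
    rw [he, h1, hs, hα, hβ]
    have : v0 * (p:ℤ)^s * ((p:ℤ)^t * e) + u0 * (p:ℤ)^s * (p:ℤ)^(t+s+1)
        = (p:ℤ)^(t+s) * (u0 * (p:ℤ)^(s+1) + v0 * e) := by ring
    rw [this, huv, mul_one]
  set u : Fin n → ℤ := fun j => α * (∑ i', if f i' = j then c i' else 0) + β * a j with hu
  have hAu : ∀ i, ∑ j, A i j * u j = p ^ (κ - 1) * b i := by
    intro i
    have hspread : ∑ j, A i j * (∑ i', if f i' = j then c i' else 0)
        = ∑ i', A i (f i') * c i' := by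
      simp only [Finset.mul_sum, mul_ite, mul_zero]
      rw [Finset.sum_comm]
      simp
    calc ∑ j, A i j * u j
        = ∑ j, (α * (A i j * (∑ i', if f i' = j then c i' else 0)) + β * (A i j * a j)) :=
          Finset.sum_congr rfl fun j _ => by simp only [hu]; ring
      _ = α * (∑ j, A i j * (∑ i', if f i' = j then c i' else 0)) + β * (∑ j, A i j * a j) := by
          rw [Finset.sum_add_distrib, Finset.mul_sum, Finset.mul_sum]
      _ = α * (d * b i) + β * (p ^ κ * b i) := by rw [hspread, hBc i, hy i]
      _ = (α * d + β * p ^ κ) * b i := by ring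
      _ = p ^ (κ - 1) * b i := by rw [hkey]
  have hmem' : κ - 1 ∈ {k : ℕ | ∃ x : Fin n → ℝ,
        (∀ j, ∃ a : ℤ, (p : ℝ) ^ k * x j = (a : ℝ)) ∧
        (∀ i, ∑ j, (A i j : ℝ) * x j = (b i : ℝ))} := by
    have hP : ((p : ℝ)) ^ (κ - 1) ≠ 0 :=
      pow_ne_zero _ (Nat.cast_ne_zero.mpr hp.pos.ne')
    refine ⟨fun j => (u j : ℝ) / (p : ℝ) ^ (κ - 1),
      fun j => ⟨u j, mul_div_cancel₀ _ hP⟩, fun i => ?_⟩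
    have hcast : (∑ j, (A i j : ℝ) * (u j : ℝ)) = (p : ℝ) ^ (κ - 1) * (b i : ℝ) := by
      have h1 : ((∑ j, A i j * u j : ℤ) : ℝ) = ((p ^ (κ - 1) * b i : ℤ) : ℝ) := by
        exact_mod_cast congrArg (fun z : ℤ => (z : ℝ)) (hAu i)
      push_cast at h1
      exact h1
    calc ∑ j, (A i j : ℝ) * ((u j : ℝ) / (p : ℝ) ^ (κ - 1))
        = (∑ j, (A i j : ℝ) * (u j : ℝ)) / (p : ℝ) ^ (κ - 1) := by
          rw [Finset.sum_div]
          exact Finset.sum_congr rfl fun j _ => (mul_div_assoc _ _ _).symm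
      _ = (b i : ℝ) := by rw [hcast, mul_div_cancel_left₀ _ hP]
  have := hlb hmem'
  omega
end

section
/- Let A be an m × n integer matrix, b ∈ ℤ^m, and let k ≥ 0 be an integer. Suppose the system Ax = b has a [p_k]-adic solution, and every [p_k]-adic solution of Ax = b has full support (all n entries nonzero). Then for every x̄ ∈ ℤ^n with Ax̄ = 0, every nonzero entry x̄_i of x̄ has a prime factor greater than or equal to p_{k+1} (equivalently, a prime factor not among the first k primes). -/
/-- A real number is `[p_k]`-adic (where `p_1 < p_2 < ⋯` are the primes) if it can be
written as `a / b` with `a` an integer and `b` a positive integer all of whose prime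
factors are among the first `k` primes. For `k = 0` this means `b = 1`, i.e. integers. -/
def IsPkAdic (k : ℕ) (x : ℝ) : Prop :=
  ∃ a : ℤ, ∃ b : ℕ, 0 < b ∧
    (∀ q : ℕ, q.Prime → q ∣ b → ∃ i < k, q = Nat.nth Nat.Prime i) ∧
    x = (a : ℝ) / (b : ℝ)

/-! If an integer kernel vector `x̄` had an entry `x̄ⱼ ≠ 0` with all prime factors among
`p_1, …, p_k`, then `1 / x̄ⱼ` would be `[p_k]`-adic, and moving a `[p_k]`-adic solution `x⁰`
along `x̄` by `t = -x⁰ⱼ / x̄ⱼ` would give a `[p_k]`-adic solution vanishing at `j`. -/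

theorem Nat.exists_lt_eq_nth_prime_of_lt_nth {q k : ℕ} (hq : q.Prime)
    (h : q < Nat.nth Nat.Prime k) : ∃ i < k, q = Nat.nth Nat.Prime i :=
  ⟨Nat.count Nat.Prime q,
    (Nat.nth_lt_nth Nat.infinite_setOfPred_prime).1 (by rwa [Nat.nth_count hq]),
    (Nat.nth_count hq).symm⟩

namespace IsPkAdic

variable {k : ℕ}

theorem add {x y : ℝ} (hx : IsPkAdic k x) (hy : IsPkAdic k y) : IsPkAdic k (x + y) := by
  obtain ⟨a₁, b₁, hb₁, hp₁, rfl⟩ := hx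
  obtain ⟨a₂, b₂, hb₂, hp₂, rfl⟩ := hy
  refine ⟨a₁ * b₂ + a₂ * b₁, b₁ * b₂, Nat.mul_pos hb₁ hb₂,
    fun q hq hdvd => (hq.dvd_mul.1 hdvd).elim (hp₁ q hq) (hp₂ q hq), ?_⟩
  have : (b₁ : ℝ) ≠ 0 := by positivity
  have : (b₂ : ℝ) ≠ 0 := by positivity
  field_simp
  push_cast
  ring

theorem mul {x y : ℝ} (hx : IsPkAdic k x) (hy : IsPkAdic k y) : IsPkAdic k (x * y) := by
  obtain ⟨a₁, b₁, hb₁, hp₁, rfl⟩ := hx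
  obtain ⟨a₂, b₂, hb₂, hp₂, rfl⟩ := hy
  refine ⟨a₁ * a₂, b₁ * b₂, Nat.mul_pos hb₁ hb₂,
    fun q hq hdvd => (hq.dvd_mul.1 hdvd).elim (hp₁ q hq) (hp₂ q hq), ?_⟩
  push_cast
  ring

theorem neg {x : ℝ} (hx : IsPkAdic k x) : IsPkAdic k (-x) := by
  obtain ⟨a, b, hb, hp, rfl⟩ := hx
  exact ⟨-a, b, hb, hp, by push_cast; ring⟩

theorem intCast (a : ℤ) : IsPkAdic k a :=
  ⟨a, 1, one_pos, fun _ hq hdvd => absurd (Nat.dvd_one.1 hdvd) hq.ne_one, by simp⟩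

end IsPkAdic

theorem isPkAdic_inv_natCast {k b : ℕ} (hb : 0 < b)
    (hsmall : ∀ q : ℕ, q.Prime → q ∣ b → q < Nat.nth Nat.Prime k) :
    IsPkAdic k (b : ℝ)⁻¹ :=
  ⟨1, b, hb, fun q hq hdvd => Nat.exists_lt_eq_nth_prime_of_lt_nth hq (hsmall q hq hdvd),
    by simp⟩

theorem isPkAdic_inv_intCast {k : ℕ} {c : ℤ} (hc : c ≠ 0)
    (hsmall : ∀ q : ℕ, q.Prime → (q : ℤ) ∣ c → q < Nat.nth Nat.Prime k) :
    IsPkAdic k (c : ℝ)⁻¹ := by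
  obtain ⟨n, rfl | rfl⟩ := Int.eq_nat_or_neg c
  · have hn : IsPkAdic k (n : ℝ)⁻¹ := isPkAdic_inv_natCast (by omega)
      fun q hq hdvd => hsmall q hq (Int.natCast_dvd_natCast.2 hdvd)
    exact_mod_cast hn
  · have hn : IsPkAdic k (n : ℝ)⁻¹ := isPkAdic_inv_natCast (by omega)
      fun q hq hdvd => hsmall q hq (dvd_neg.2 (Int.natCast_dvd_natCast.2 hdvd))
    simpa using hn.neg

theorem sum_mul_add_mul_eq_of_sum_mul_eq_zero {ι R : Type*} [Fintype ι] [CommRing R]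
    (a y z : ι → R) (t : R) (hz : ∑ j, a j * z j = 0) :
    ∑ j, a j * (y j + t * z j) = ∑ j, a j * y j := by
  simp only [mul_add, Finset.sum_add_distrib, mul_left_comm _ t, ← Finset.mul_sum, hz,
    mul_zero, add_zero]

theorem stmt_16 (m n : ℕ) (A : Matrix (Fin m) (Fin n) ℤ) (b : Fin m → ℤ) (k : ℕ)
    (hfeas : ∃ x : Fin n → ℝ, (∀ j, IsPkAdic k (x j)) ∧
      ∀ i, ∑ j, (A i j : ℝ) * x j = (b i : ℝ))
    (hfull : ∀ x : Fin n → ℝ,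
      ((∀ j, IsPkAdic k (x j)) ∧ ∀ i, ∑ j, (A i j : ℝ) * x j = (b i : ℝ)) →
      ∀ j, x j ≠ 0) :
    ∀ x : Fin n → ℤ, (∀ i, ∑ j, A i j * x j = 0) →
      ∀ j, x j ≠ 0 → ∃ q : ℕ, q.Prime ∧ (q : ℤ) ∣ x j ∧ Nat.nth Nat.Prime k ≤ q := by
  intro x hAx j hxj
  by_contra! hsmall
  obtain ⟨x₀, hx₀, hAx₀⟩ := hfeas
  set t : ℝ := -x₀ j * (x j : ℝ)⁻¹
  have ht : IsPkAdic k t := (hx₀ j).neg.mul (isPkAdic_inv_intCast hxj hsmall)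
  have hAxℝ (i : Fin m) : ∑ l, (A i l : ℝ) * x l = 0 := by exact_mod_cast hAx i
  refine hfull (fun l => x₀ l + t * x l)
    ⟨fun l => (hx₀ l).add (ht.mul (IsPkAdic.intCast _)),
      fun i => (sum_mul_add_mul_eq_of_sum_mul_eq_zero _ _ _ t (hAxℝ i)).trans (hAx₀ i)⟩ j ?_
  have : (x j : ℝ) ≠ 0 := by exact_mod_cast hxj
  simp [t, this]
end

section
/- Let A be an m × n integer matrix, b ∈ ℤ^m, w ∈ ℝ^n, and let k ≥ 0 be an integer. Suppose the program min{ wᵀx : Ax = b, x ≥ 0, x [p_k]-adic } has an optimal solution (a feasible point attaining the infimum of wᵀx over all feasible points), and every optimal solution has full support (all n entries nonzero). Then for every nonzero x̄ ∈ ℤ^n with Ax̄ = 0, there exists a nonzero entry x̄_i of x̄ having a prime factor greater than or equal to p_{k+1} (equivalently, a prime factor not among the first k primes). -/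
private lemma isPkAdic_int (k : ℕ) (a : ℤ) : IsPkAdic k (a : ℝ) :=
  ⟨a, 1, one_pos, fun q hq hdvd =>
    absurd (Nat.le_of_dvd one_pos hdvd) (by have := hq.two_le; omega), by simp⟩

private lemma IsPkAdic.mul_s17 {k : ℕ} {x y : ℝ} (hx : IsPkAdic k x) (hy : IsPkAdic k y) :
    IsPkAdic k (x * y) := by
  obtain ⟨a1, b1, hb1, hs1, rfl⟩ := hx
  obtain ⟨a2, b2, hb2, hs2, rfl⟩ := hy
  refine ⟨a1 * a2, b1 * b2, Nat.mul_pos hb1 hb2, ?_, ?_⟩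
  · intro q hq hdvd
    rcases hq.dvd_mul.mp hdvd with h | h
    · exact hs1 q hq h
    · exact hs2 q hq h
  · push_cast
    rw [div_mul_div_comm]

private lemma IsPkAdic.sub {k : ℕ} {x y : ℝ} (hx : IsPkAdic k x) (hy : IsPkAdic k y) :
    IsPkAdic k (x - y) := by
  obtain ⟨a1, b1, hb1, hs1, rfl⟩ := hx
  obtain ⟨a2, b2, hb2, hs2, rfl⟩ := hy
  refine ⟨a1 * b2 - a2 * b1, b1 * b2, Nat.mul_pos hb1 hb2, ?_, ?_⟩
  · intro q hq hdvd
    rcases hq.dvd_mul.mp hdvd with h | h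
    · exact hs1 q hq h
    · exact hs2 q hq h
  · have h1 : (b1 : ℝ) ≠ 0 := Nat.cast_ne_zero.mpr hb1.ne'
    have h2 : (b2 : ℝ) ≠ 0 := Nat.cast_ne_zero.mpr hb2.ne'
    push_cast
    field_simp

private lemma IsPkAdic.neg_s17 {k : ℕ} {x : ℝ} (hx : IsPkAdic k x) : IsPkAdic k (-x) := by
  obtain ⟨a, b, hb, hs, rfl⟩ := hx
  exact ⟨-a, b, hb, hs, by push_cast [neg_div]; ring⟩

private lemma IsPkAdic.div_abs {k : ℕ} {x : ℝ} (hx : IsPkAdic k x) (c : ℤ) (hc : c ≠ 0)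
    (hsm : ∀ q : ℕ, q.Prime → (q : ℤ) ∣ c → ∃ i < k, q = Nat.nth Nat.Prime i) :
    IsPkAdic k (x / |(c : ℝ)|) := by
  obtain ⟨a, bn, hb, hs, rfl⟩ := hx
  refine ⟨a, bn * c.natAbs, Nat.mul_pos hb (Int.natAbs_pos.mpr hc), ?_, ?_⟩
  · intro q hq hdvd
    rcases hq.dvd_mul.mp hdvd with h | h
    · exact hs q hq h
    · exact hsm q hq (Int.dvd_natAbs.mp (Int.natCast_dvd_natCast.mpr h))
  · push_cast [Nat.cast_natAbs]
    rw [div_div]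

theorem stmt_17 (m n : ℕ) (A : Matrix (Fin m) (Fin n) ℤ) (b : Fin m → ℤ)
    (w : Fin n → ℝ) (k : ℕ)
    (hopt : ∃ x : Fin n → ℝ,
      ((∀ i, ∑ j, (A i j : ℝ) * x j = (b i : ℝ)) ∧ (∀ j, 0 ≤ x j) ∧
        ∀ j, IsPkAdic k (x j)) ∧
      ∀ y : Fin n → ℝ,
        ((∀ i, ∑ j, (A i j : ℝ) * y j = (b i : ℝ)) ∧ (∀ j, 0 ≤ y j) ∧
          ∀ j, IsPkAdic k (y j)) →
        ∑ j, w j * x j ≤ ∑ j, w j * y j)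
    (hfull : ∀ x : Fin n → ℝ,
      (((∀ i, ∑ j, (A i j : ℝ) * x j = (b i : ℝ)) ∧ (∀ j, 0 ≤ x j) ∧
          ∀ j, IsPkAdic k (x j)) ∧
        ∀ y : Fin n → ℝ,
          ((∀ i, ∑ j, (A i j : ℝ) * y j = (b i : ℝ)) ∧ (∀ j, 0 ≤ y j) ∧
            ∀ j, IsPkAdic k (y j)) →
          ∑ j, w j * x j ≤ ∑ j, w j * y j) →
      ∀ j, x j ≠ 0) :
    ∀ x : Fin n → ℤ, x ≠ 0 → (∀ i, ∑ j, A i j * x j = 0) →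
      ∃ j, x j ≠ 0 ∧ ∃ q : ℕ, q.Prime ∧ (q : ℤ) ∣ x j ∧ Nat.nth Nat.Prime k ≤ q := by
  intro xb hxb hker
  by_contra hcon
  push_neg at hcon
  -- every prime factor of any nonzero entry is among the first k primes
  have hsmooth : ∀ j, xb j ≠ 0 → ∀ q : ℕ, q.Prime → (q : ℤ) ∣ xb j →
      ∃ i < k, q = Nat.nth Nat.Prime i := by
    intro j hj q hq hd
    have hlt : q < Nat.nth Nat.Prime k := hcon j hj q hq hd
    refine ⟨Nat.count Nat.Prime q, ?_, (Nat.nth_count hq).symm⟩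
    by_contra hle
    push_neg at hle
    have := Nat.nth_monotone Nat.infinite_setOf_prime hle
    rw [Nat.nth_count hq] at this
    exact absurd hlt (not_lt.mpr this)
  obtain ⟨xs, hxsfeas, hxsopt⟩ := hopt
  have hpos : ∀ j, 0 < xs j := fun j =>
    lt_of_le_of_ne (hxsfeas.2.1 j) (Ne.symm (hfull xs ⟨hxsfeas, hxsopt⟩ j))
  have hker' : ∀ i, ∑ j, (A i j : ℝ) * (xb j : ℝ) = 0 := by
    intro i
    have := hker i
    exact_mod_cast congrArg (Int.cast : ℤ → ℝ) this
  obtain ⟨j1, hj1⟩ := Function.ne_iff.mp hxb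
  have hj1' : xb j1 ≠ 0 := by simpa using hj1
  set F : Finset (Fin n) := Finset.univ.filter (fun j => xb j ≠ 0) with hF
  have hFne : F.Nonempty := ⟨j1, by simp [hF, hj1']⟩
  obtain ⟨j0, hj0F, hj0min⟩ :=
    F.exists_min_image (fun j => xs j / |(xb j : ℝ)|) hFne
  have hxbj0 : xb j0 ≠ 0 := by simpa [hF] using hj0F
  have hxbj0' : (xb j0 : ℝ) ≠ 0 := Int.cast_ne_zero.mpr hxbj0
  set s : ℝ := xs j0 / |(xb j0 : ℝ)| with hsdef
  have hspos : 0 < s := div_pos (hpos j0) (abs_pos.mpr hxbj0')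
  have hsadic : IsPkAdic k s :=
    (hxsfeas.2.2 j0).div_abs (xb j0) hxbj0 (hsmooth j0 hxbj0)
  -- key bound
  have hbound : ∀ j, s * |(xb j : ℝ)| ≤ xs j := by
    intro j
    by_cases h : xb j = 0
    · simp [h]; exact (hpos j).le
    · have hjF : j ∈ F := by simp [hF, h]
      have := hj0min j hjF
      have habs : 0 < |(xb j : ℝ)| := abs_pos.mpr (Int.cast_ne_zero.mpr h)
      calc s * |(xb j : ℝ)| ≤ (xs j / |(xb j : ℝ)|) * |(xb j : ℝ)| := by
            exact mul_le_mul_of_nonneg_right this habs.le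
        _ = xs j := div_mul_cancel₀ _ habs.ne'
  -- feasibility of perturbed points
  have hfeas : ∀ t : ℝ, |t| ≤ s → IsPkAdic k t →
      ((∀ i, ∑ j, (A i j : ℝ) * (xs j - t * xb j) = (b i : ℝ)) ∧
        (∀ j, 0 ≤ xs j - t * xb j) ∧ ∀ j, IsPkAdic k (xs j - t * xb j)) := by
    intro t ht htadic
    refine ⟨?_, ?_, ?_⟩
    · intro i
      have hsum : ∑ j, (A i j : ℝ) * (xs j - t * xb j) =
          (∑ j, (A i j : ℝ) * xs j) - t * ∑ j, (A i j : ℝ) * xb j := by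
        rw [Finset.mul_sum, ← Finset.sum_sub_distrib]
        exact Finset.sum_congr rfl fun j _ => by ring
      rw [hsum, hxsfeas.1 i, hker' i, mul_zero, sub_zero]
    · intro j
      have h1 : t * xb j ≤ |t * xb j| := le_abs_self _
      have h2 : |t * xb j| ≤ s * |(xb j : ℝ)| := by
        rw [abs_mul]
        exact mul_le_mul_of_nonneg_right ht (abs_nonneg _)
      have := hbound j
      linarith
    · intro j
      exact (hxsfeas.2.2 j).sub (htadic.mul_s17 (isPkAdic_int k (xb j)))
  have hsabs : |s| = s := abs_of_pos hspos
  have hnegsabs : |(-s)| = s := by rw [abs_neg, hsabs]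
  -- c = wᵀ x̄ = 0
  set c : ℝ := ∑ j, w j * xb j with hcdef
  have hwsum : ∀ t : ℝ, ∑ j, w j * (xs j - t * xb j) = (∑ j, w j * xs j) - t * c := by
    intro t
    rw [hcdef, Finset.mul_sum, ← Finset.sum_sub_distrib]
    exact Finset.sum_congr rfl fun j _ => by ring
  have hcge : 0 ≤ c := by
    have hf := hfeas (-s) hnegsabs.le hsadic.neg_s17
    have := hxsopt _ hf
    rw [hwsum (-s)] at this
    nlinarith
  have hcle : c ≤ 0 := by
    have hf := hfeas s hsabs.le hsadic
    have := hxsopt _ hf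
    rw [hwsum s] at this
    nlinarith
  have hc0 : c = 0 := le_antisymm hcle hcge
  -- the perturbed optimal point with a zero coordinate
  set d : ℝ := if 0 < xb j0 then 1 else -1 with hddef
  have hdabs : |s * d| = s := by
    rcases ite_eq_or_eq (0 < xb j0) (1 : ℝ) (-1) with h | h <;>
      rw [hddef, h] <;> simp [abs_of_pos hspos]
  have hdadic : IsPkAdic k (s * d) := by
    rcases lt_or_ge 0 (xb j0) with h | h
    · simpa [hddef, if_pos h] using hsadic
    · have : ¬ (0 < xb j0) := not_lt.mpr h
      rw [hddef, if_neg this]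
      simpa [mul_neg, mul_one] using hsadic.neg_s17
  have hyfeas := hfeas (s * d) hdabs.le hdadic
  have hyopt : ∀ y : Fin n → ℝ,
      ((∀ i, ∑ j, (A i j : ℝ) * y j = (b i : ℝ)) ∧ (∀ j, 0 ≤ y j) ∧
        ∀ j, IsPkAdic k (y j)) →
      ∑ j, w j * (xs j - (s * d) * xb j) ≤ ∑ j, w j * y j := by
    intro y hy
    rw [hwsum (s * d), hc0, mul_zero, sub_zero]
    exact hxsopt y hy
  have hzero : xs j0 - (s * d) * xb j0 = 0 := by
    have hdx : d * (xb j0 : ℝ) = |(xb j0 : ℝ)| := by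
      rcases lt_or_ge 0 (xb j0) with h | h
      · have : (0:ℝ) < xb j0 := by exact_mod_cast h
        rw [hddef, if_pos h, one_mul, abs_of_pos this]
      · have h' : xb j0 < 0 := lt_of_le_of_ne h hxbj0
        have : (xb j0 : ℝ) < 0 := by exact_mod_cast h'
        rw [hddef, if_neg (not_lt.mpr h), abs_of_neg this]
        ring
    rw [mul_assoc, hdx, hsdef, div_mul_cancel₀ _ (abs_ne_zero.mpr hxbj0')]
    ring
  exact hfull _ ⟨hyfeas, hyopt⟩ j0 hzero
end
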